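/- arXiv:1512.06992 — 9 statements merged into one kernel-verified Lean document; each statement's English description precedes it below -/
import Mathlib

section
/- Let D and D̃ be two datasets of the same size N over a Bayesian network of Boolean variables that are neighbouring (they differ in at most one record). Then the vectors of posterior update counts satisfy the ℓ1 bound Σ_{i∈I} Σ_{j∈{0,1}^{π_i}} ( |Δα_{i,j}(D) − Δα_{i,j}(D̃)| + |Δβ_{i,j}(D) − Δβ_{i,j}(D̃)| ) ≤ 2|I|. -/
open Finset

variable {I : Type*}

/-- `Δα_{i,j}(D)`: the number of records `x` in `D` with parent configuration
`x_{π_i} = j` and `x_i = 1 (= true)`. -/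
def deltaAlpha (π : I → Finset I) (i : I) (j : {l // l ∈ π i} → Bool)
    {N : ℕ} (D : Fin N → I → Bool) : ℕ :=
  (Finset.univ.filter fun r : Fin N =>
    (∀ l : {l // l ∈ π i}, D r l = j l) ∧ D r i = true).card

/-- `Δβ_{i,j}(D)`: the number of records `x` in `D` with parent configuration
`x_{π_i} = j` and `x_i = 0 (= false)`. -/
def deltaBeta (π : I → Finset I) (i : I) (j : {l // l ∈ π i} → Bool)
    {N : ℕ} (D : Fin N → I → Bool) : ℕ :=
  (Finset.univ.filter fun r : Fin N =>
    (∀ l : {l // l ∈ π i}, D r l = j l) ∧ D r i = false).card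

section aux

variable [Fintype I] [DecidableEq I]

/-- generic count -/
private def cnt (π : I → Finset I) (i : I) (j : {l // l ∈ π i} → Bool) (b : Bool)
    {N : ℕ} (D : Fin N → I → Bool) : ℕ :=
  (Finset.univ.filter fun r : Fin N =>
    (∀ l : {l // l ∈ π i}, D r l = j l) ∧ D r i = b).card

private lemma cnt_cast (π : I → Finset I) (i : I) (j : {l // l ∈ π i} → Bool) (b : Bool)
    {N : ℕ} (D : Fin N → I → Bool) :
    (cnt π i j b D : ℝ) =
      ∑ r : Fin N, if (∀ l : {l // l ∈ π i}, D r l = j l) ∧ D r i = b then (1:ℝ) else 0 := by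
  rw [cnt, Finset.card_filter]
  push_cast
  simp

private lemma cnt_diff (π : I → Finset I) (i : I) (j : {l // l ∈ π i} → Bool) (b : Bool)
    {N : ℕ} (D D' : Fin N → I → Bool) (r₀ : Fin N)
    (h : ∀ r : Fin N, r ≠ r₀ → D r = D' r) :
    (cnt π i j b D : ℝ) - (cnt π i j b D' : ℝ) =
      (if (∀ l : {l // l ∈ π i}, D r₀ l = j l) ∧ D r₀ i = b then (1:ℝ) else 0) -
      (if (∀ l : {l // l ∈ π i}, D' r₀ l = j l) ∧ D' r₀ i = b then (1:ℝ) else 0) := by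
  rw [cnt_cast, cnt_cast, ← Finset.sum_sub_distrib]
  rw [Fintype.sum_eq_single r₀]
  intro r hr
  rw [h r hr]
  ring

set_option linter.unusedSectionVars false in
private lemma sum_ind (π : I → Finset I) (i : I) (x : I → Bool) :
    ∑ j : {l // l ∈ π i} → Bool,
      ((if (∀ l : {l // l ∈ π i}, x l = j l) ∧ x i = true then (1:ℝ) else 0) +
       (if (∀ l : {l // l ∈ π i}, x l = j l) ∧ x i = false then (1:ℝ) else 0)) = 1 := by
  have key : ∀ j : {l // l ∈ π i} → Bool,
      ((if (∀ l : {l // l ∈ π i}, x l = j l) ∧ x i = true then (1:ℝ) else 0) +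
       (if (∀ l : {l // l ∈ π i}, x l = j l) ∧ x i = false then (1:ℝ) else 0)) =
      if j = (fun l : {l // l ∈ π i} => x l) then 1 else 0 := by
    intro j
    have hiff : (∀ l : {l // l ∈ π i}, x l = j l) ↔ j = (fun l : {l // l ∈ π i} => x l) := by
      constructor
      · intro h; funext l; exact (h l).symm
      · intro h l; rw [h]
    have hiff' : (∀ (a : I) (b : a ∈ π i), x a = j ⟨a, b⟩) ↔ j = fun l : {l // l ∈ π i} => x ↑l :=
      (Subtype.forall.symm).trans hiff
    cases hx : x i <;> simp [hx, hiff']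
  rw [Finset.sum_congr rfl (fun j _ => key j)]
  simp

end aux

/-- If two Boolean datasets `D, D̃` of size `N` over a Bayesian network with nodes `I`
and parent sets `π` are neighbouring (they differ in at most one record), then the
posterior update counts satisfy
`Σ_{i∈I} Σ_{j∈{0,1}^{π_i}} (|Δα_{i,j}(D)−Δα_{i,j}(D̃)| + |Δβ_{i,j}(D)−Δβ_{i,j}(D̃)|) ≤ 2|I|`. -/
theorem stmt_0 [Fintype I] [DecidableEq I] (π : I → Finset I) (N : ℕ) (D D' : Fin N → I → Bool)
    (hneighbour : ∀ r r' : Fin N, D r ≠ D' r → D r' ≠ D' r' → r = r') :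
    ∑ i : I, ∑ j : {l // l ∈ π i} → Bool,
      (|(deltaAlpha π i j D : ℝ) - (deltaAlpha π i j D' : ℝ)| +
        |(deltaBeta π i j D : ℝ) - (deltaBeta π i j D' : ℝ)|)
      ≤ 2 * Fintype.card I := by
  by_cases hDD : D = D'
  · subst hDD
    simp
  · obtain ⟨r₀, hr₀⟩ : ∃ r, D r ≠ D' r := by
      by_contra h
      push_neg at h
      exact hDD (funext h)
    have hagree : ∀ r : Fin N, r ≠ r₀ → D r = D' r := by
      intro r hr
      by_contra h
      exact hr (hneighbour r r₀ h hr₀)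
    have hinner : ∀ i : I, ∑ j : {l // l ∈ π i} → Bool,
        (|(deltaAlpha π i j D : ℝ) - (deltaAlpha π i j D' : ℝ)| +
          |(deltaBeta π i j D : ℝ) - (deltaBeta π i j D' : ℝ)|) ≤ 2 := by
      intro i
      have hDa : ∀ j, (deltaAlpha π i j D : ℝ) = (cnt π i j true D : ℝ) := fun j => rfl
      have hDb : ∀ j, (deltaBeta π i j D : ℝ) = (cnt π i j false D : ℝ) := fun j => rfl
      calc ∑ j : {l // l ∈ π i} → Bool,
            (|(deltaAlpha π i j D : ℝ) - (deltaAlpha π i j D' : ℝ)| +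
              |(deltaBeta π i j D : ℝ) - (deltaBeta π i j D' : ℝ)|)
          ≤ ∑ j : {l // l ∈ π i} → Bool,
            (((if (∀ l : {l // l ∈ π i}, D r₀ l = j l) ∧ D r₀ i = true then (1:ℝ) else 0) +
              (if (∀ l : {l // l ∈ π i}, D r₀ l = j l) ∧ D r₀ i = false then (1:ℝ) else 0)) +
             ((if (∀ l : {l // l ∈ π i}, D' r₀ l = j l) ∧ D' r₀ i = true then (1:ℝ) else 0) +
              (if (∀ l : {l // l ∈ π i}, D' r₀ l = j l) ∧ D' r₀ i = false then (1:ℝ) else 0))) := by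
            apply Finset.sum_le_sum
            intro j _
            have ha := cnt_diff π i j true D D' r₀ hagree
            have hb := cnt_diff π i j false D D' r₀ hagree
            have ha' : |(deltaAlpha π i j D : ℝ) - (deltaAlpha π i j D' : ℝ)| ≤
                (if (∀ l : {l // l ∈ π i}, D r₀ l = j l) ∧ D r₀ i = true then (1:ℝ) else 0) +
                (if (∀ l : {l // l ∈ π i}, D' r₀ l = j l) ∧ D' r₀ i = true then (1:ℝ) else 0) := by
              show |(cnt π i j true D : ℝ) - (cnt π i j true D' : ℝ)| ≤ _
              rw [ha]
              split_ifs <;> norm_num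
            have hb' : |(deltaBeta π i j D : ℝ) - (deltaBeta π i j D' : ℝ)| ≤
                (if (∀ l : {l // l ∈ π i}, D r₀ l = j l) ∧ D r₀ i = false then (1:ℝ) else 0) +
                (if (∀ l : {l // l ∈ π i}, D' r₀ l = j l) ∧ D' r₀ i = false then (1:ℝ) else 0) := by
              show |(cnt π i j false D : ℝ) - (cnt π i j false D' : ℝ)| ≤ _
              rw [hb]
              split_ifs <;> norm_num
            linarith
        _ = 2 := by
            rw [Finset.sum_add_distrib, sum_ind, sum_ind]
            norm_num
    calc ∑ i : I, ∑ j : {l // l ∈ π i} → Bool,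
          (|(deltaAlpha π i j D : ℝ) - (deltaAlpha π i j D' : ℝ)| +
            |(deltaBeta π i j D : ℝ) - (deltaBeta π i j D' : ℝ)|)
        ≤ ∑ _i : I, (2:ℝ) := Finset.sum_le_sum (fun i _ => hinner i)
      _ = 2 * Fintype.card I := by simp [mul_comm]
end

section
/- Fix ε > 0. Let M be the randomised mechanism that, given a dataset D of size N, outputs the vector Δω(D) + W, where Δω(D) is the vector of all update counts (Δα_{i,j}(D), Δβ_{i,j}(D))_{i∈I, j∈{0,1}^{π_i}} and W is a vector of independent Laplace random variables each with scale 2|I|/ε; optionally each coordinate of the output is then clamped to the interval [0, N]. Then M is ε-differentially private: for every pair of neighbouring datasets D, D̃ of size N and every measurable set B of output vectors, Pr[M(D) ∈ B] ≤ e^ε · Pr[M(D̃) ∈ B]. -/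
/-!
Translating the Laplace density of scale `b` by `c` multiplies it pointwise by at most
`exp (|c| / b)`, since `|x| ≤ |c| + |x - c|`. Hence translating a vector of independent Laplace
noises by `c` costs at most a factor `exp (‖c‖₁ / b)`, and deterministic post-processing such as
clamping keeps this bound. Changing one record changes the class `(x_{π_i}, x_i)` of one record
for each node `i`, so it moves at most two counts of node `i`, each by one: the `ℓ¹`-sensitivity of
`Δω` is at most `2|I|`, and the scale `2|I|/ε` turns the factor into `e^ε`.
-/

open MeasureTheory Finset

/-- The Laplace distribution on `ℝ` with scale `b`: the measure with density
`x ↦ (1/(2b))·exp(−|x|/b)` with respect to Lebesgue measure. -/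
noncomputable def laplaceMeasure (b : ℝ) : Measure ℝ :=
  MeasureTheory.volume.withDensity fun x => ENNReal.ofReal (1 / (2 * b) * Real.exp (-|x| / b))

variable {I : Type*}

/-- The vector `Δω(D)` of all posterior update counts
`(Δα_{i,j}(D), Δβ_{i,j}(D))_{i∈I, j∈{0,1}^{π_i}}`, indexed by triples `((i, j), b)`
where `b = true` selects the `Δα` coordinate and `b = false` the `Δβ` coordinate. -/
def updateVec (π : I → Finset I) {N : ℕ} (D : Fin N → I → Bool)
    (p : ((i : I) × ({l // l ∈ π i} → Bool)) × Bool) : ℝ :=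
  if p.2 then (deltaAlpha π p.1.1 p.1.2 D : ℝ) else (deltaBeta π p.1.1 p.1.2 D : ℝ)

/-- The Laplace mechanism on posterior updates: output `Δω(D) + W` where the `W`
coordinates are i.i.d. Laplace with scale `2|I|/ε`; if `clamp = true`, each output
coordinate is further clamped to `[0, N]`. -/
noncomputable def laplaceMech [Fintype I] [DecidableEq I] (π : I → Finset I)
    (ε : ℝ) (clamp : Bool) {N : ℕ} (D : Fin N → I → Bool) :
    Measure (((i : I) × ({l // l ∈ π i} → Bool)) × Bool → ℝ) :=
  (Measure.pi fun _ : ((i : I) × ({l // l ∈ π i} → Bool)) × Bool =>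
      laplaceMeasure (2 * Fintype.card I / ε)).map
    fun w idx =>
      (if clamp then fun x : ℝ => max 0 (min x N) else id) (updateVec π D idx + w idx)

open scoped ENNReal

namespace MeasureTheory.Measure

variable {ι : Type*} [Fintype ι] {α : ι → Type*} [∀ i, MeasurableSpace (α i)]

theorem pi_mono {μ ν : (i : ι) → Measure (α i)} (h : ∀ i, μ i ≤ ν i) :
    Measure.pi μ ≤ Measure.pi ν := by
  have houter : OuterMeasure.pi (fun i => (μ i).toOuterMeasure)
      ≤ OuterMeasure.pi fun i => (ν i).toOuterMeasure :=
    OuterMeasure.le_boundedBy.mpr fun s => (OuterMeasure.boundedBy_le s).trans <|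
      Finset.prod_le_prod' fun i _ => h i _
  refine Measure.le_iff.mpr fun s hs => ?_
  rw [Measure.pi_def, Measure.pi_def, toMeasure_apply _ _ hs, toMeasure_apply _ _ hs]
  exact houter s

theorem pi_smul (μ : (i : ι) → Measure (α i)) [∀ i, SigmaFinite (μ i)] {k : ι → ℝ≥0∞}
    (hk : ∀ i, k i ≠ ∞) :
    Measure.pi (fun i => k i • μ i) = (∏ i, k i) • Measure.pi μ := by
  have : ∀ i, SigmaFinite (k i • μ i) := fun i => by
    rw [← withDensity_const]
    exact SigmaFinite.withDensity_of_ne_top' fun _ => hk i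
  refine Measure.pi_eq fun s _ => ?_
  simp [Measure.pi_pi, Finset.prod_mul_distrib]

end MeasureTheory.Measure

theorem MeasureTheory.map_add_right_withDensity {G : Type*} [MeasurableSpace G] [AddGroup G]
    [MeasurableAdd G] [MeasurableSub G] {μ : Measure G} [μ.IsAddRightInvariant] {f : G → ℝ≥0∞}
    (hf : Measurable f) (c : G) :
    (μ.withDensity f).map (· + c) = μ.withDensity fun x => f (x - c) := by
  have hfc : Measurable fun x => f (x - c) := hf.comp (measurable_sub_const c)
  ext s hs
  rw [Measure.map_apply (measurable_add_const c) hs,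
    withDensity_apply _ (hs.preimage (measurable_add_const c)), withDensity_apply _ hs]
  simpa using (measurePreserving_add_right μ c).setLIntegral_comp_preimage hs hfc

theorem measurable_laplaceDensity (b : ℝ) :
    Measurable fun x : ℝ => ENNReal.ofReal (1 / (2 * b) * Real.exp (-|x| / b)) := by
  fun_prop

-- `ENNReal.ofReal` truncates the nonpositive density to `0`; this covers the scale
-- `2|I|/ε = 0` of an empty `I`, so the Laplace bounds below need no positivity hypothesis.
theorem laplaceMeasure_of_nonpos {b : ℝ} (hb : b ≤ 0) : laplaceMeasure b = 0 := by
  have hdens (x : ℝ) : 1 / (2 * b) * Real.exp (-|x| / b) ≤ 0 :=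
    mul_nonpos_of_nonpos_of_nonneg (one_div_nonpos.mpr (by linarith)) (Real.exp_nonneg _)
  simp only [laplaceMeasure, ENNReal.ofReal_of_nonpos (hdens _)]
  exact withDensity_zero

instance (b : ℝ) : SigmaFinite (laplaceMeasure b) := by
  unfold laplaceMeasure; infer_instance

theorem laplaceMeasure_map_add_le (b c : ℝ) :
    (laplaceMeasure b).map (· + c) ≤ ENNReal.ofReal (Real.exp (|c| / b)) • laplaceMeasure b := by
  rcases le_or_gt b 0 with hb | hb
  · simp [laplaceMeasure_of_nonpos hb]
  rw [laplaceMeasure, map_add_right_withDensity (measurable_laplaceDensity b),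
    ← withDensity_smul _ (measurable_laplaceDensity b)]
  refine withDensity_mono (ae_of_all _ fun x => ?_)
  rw [Pi.smul_apply, smul_eq_mul, ← ENNReal.ofReal_mul (Real.exp_nonneg _)]
  refine ENNReal.ofReal_le_ofReal ?_
  have hexp : -|x - c| / b ≤ |c| / b + -|x| / b := by
    rw [← add_div]
    gcongr
    linarith [abs_sub_abs_le_abs_sub x c]
  calc 1 / (2 * b) * Real.exp (-|x - c| / b)
      ≤ 1 / (2 * b) * Real.exp (|c| / b + -|x| / b) := by gcongr
    _ = Real.exp (|c| / b) * (1 / (2 * b) * Real.exp (-|x| / b)) := by rw [Real.exp_add]; ring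

theorem pi_laplaceMeasure_map_add_le {ι : Type*} [Fintype ι] (b : ℝ) (c : ι → ℝ) :
    (Measure.pi fun _ : ι => laplaceMeasure b).map (· + c)
      ≤ ENNReal.ofReal (Real.exp (∑ i, |c i| / b)) • Measure.pi fun _ : ι => laplaceMeasure b := by
  have (i : ι) : SigmaFinite ((laplaceMeasure b).map (· + c i)) :=
    (measurableEmbedding_addRight (c i)).sigmaFinite_map
  have hshift : (Measure.pi fun _ : ι => laplaceMeasure b).map (· + c)
      = Measure.pi fun i => (laplaceMeasure b).map (· + c i) :=
    (measurePreserving_pi _ _ fun i => ⟨measurable_add_const (c i), rfl⟩).map_eq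
  rw [hshift, Real.exp_sum, ENNReal.ofReal_prod_of_nonneg fun _ _ => (Real.exp_nonneg _),
    ← Measure.pi_smul _ fun _ => ENNReal.ofReal_ne_top]
  exact Measure.pi_mono fun i => laplaceMeasure_map_add_le b (c i)

theorem pi_laplaceMeasure_map_comp_add_le {ι Y : Type*} [Fintype ι] [MeasurableSpace Y] (b : ℝ)
    {post : (ι → ℝ) → Y} (hpost : Measurable post) (u v : ι → ℝ) :
    (Measure.pi fun _ : ι => laplaceMeasure b).map (fun w => post (u + w))
      ≤ ENNReal.ofReal (Real.exp (∑ i, |u i - v i| / b)) •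
          (Measure.pi fun _ : ι => laplaceMeasure b).map (fun w => post (v + w)) := by
  have hpost_v : Measurable fun w => post (v + w) := hpost.comp (measurable_const_add v)
  have hcomp : (fun w => post (u + w)) = (fun w => post (v + w)) ∘ (· + (u - v)) := by
    funext w
    simp only [Function.comp_apply]
    congr 1
    abel
  rw [hcomp, ← Measure.map_map hpost_v (measurable_add_const _), ← Measure.map_smul]
  exact Measure.map_mono (pi_laplaceMeasure_map_add_le b (u - v)) hpost_v

theorem Finset.sum_abs_card_fiber_sub_le {α β : Type*} [Fintype α] [DecidableEq α] [Fintype β]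
    [DecidableEq β] (f g : α → β) (s : Finset α) (hfg : ∀ a ∉ s, f a = g a) :
    ∑ p, |(#{a | f a = p} : ℝ) - #{a | g a = p}| ≤ 2 * #s := by
  have hcount (h : α → β) (p : β) :
      #{a | h a = p} = #{a ∈ s | h a = p} + #{a ∈ sᶜ | h a = p} := by
    rw [← card_union_of_disjoint (disjoint_filter_filter disjoint_compl_right), ← filter_union,
      union_compl]
  have hout (p : β) : ({a ∈ sᶜ | f a = p} : Finset α) = {a ∈ sᶜ | g a = p} :=
    filter_congr fun a ha => by rw [hfg a (mem_compl.mp ha)]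
  have hfiber (h : α → β) : ∑ p, (#{a ∈ s | h a = p} : ℝ) = #s := by
    exact_mod_cast (card_eq_sum_card_fiberwise fun a _ => mem_univ (h a)).symm
  calc ∑ p, |(#{a | f a = p} : ℝ) - #{a | g a = p}|
      = ∑ p, |(#{a ∈ s | f a = p} : ℝ) - #{a ∈ s | g a = p}| := by
        simp only [hcount, hout, Nat.cast_add, add_sub_add_right_eq_sub]
    _ ≤ ∑ p, ((#{a ∈ s | f a = p} : ℝ) + #{a ∈ s | g a = p}) :=
        sum_le_sum fun p _ => (abs_sub _ _).trans_eq (by simp only [Nat.abs_cast])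
    _ = 2 * #s := by rw [sum_add_distrib, hfiber, hfiber]; ring

def recordClass (π : I → Finset I) (i : I) (x : I → Bool) : ({l // l ∈ π i} → Bool) × Bool :=
  (fun l => x l, x i)

theorem updateVec_eq_card (π : I → Finset I) {N : ℕ} (D : Fin N → I → Bool) (i : I)
    (j : {l // l ∈ π i} → Bool) (b : Bool) :
    updateVec π D (⟨i, j⟩, b) = #{r | recordClass π i (D r) = (j, b)} := by
  cases b <;> simp [updateVec, deltaAlpha, deltaBeta, recordClass, Prod.ext_iff, funext_iff]

theorem sum_abs_updateVec_sub_le [Fintype I] [DecidableEq I] (π : I → Finset I) {N : ℕ}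
    (D D' : Fin N → I → Bool)
    (hneighbour : ∀ r r' : Fin N, D r ≠ D' r → D r' ≠ D' r' → r = r') :
    ∑ p, |updateVec π D p - updateVec π D' p| ≤ 2 * Fintype.card I := by
  set s : Finset (Fin N) := {r | D r ≠ D' r}
  have hs : #s ≤ 1 := card_le_one.mpr fun r hr r' hr' =>
    hneighbour r r' (mem_filter.mp hr).2 (mem_filter.mp hr').2
  have hout (r : Fin N) (hr : r ∉ s) : D r = D' r := by simpa [s] using hr
  calc ∑ p, |updateVec π D p - updateVec π D' p|
      = ∑ i, ∑ q : ({l // l ∈ π i} → Bool) × Bool,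
          |(#{r | recordClass π i (D r) = q} : ℝ) - #{r | recordClass π i (D' r) = q}| := by
        simp only [Fintype.sum_prod_type, Fintype.sum_sigma, updateVec_eq_card]
    _ ≤ ∑ _i : I, 2 * (1 : ℝ) := sum_le_sum fun i _ =>
        (sum_abs_card_fiber_sub_le _ _ s fun r hr => by rw [hout r hr]).trans
          (by gcongr; exact_mod_cast hs)
    _ = 2 * Fintype.card I := by simp [mul_comm]

theorem stmt_1_general [Fintype I] [DecidableEq I] (π : I → Finset I) (ε : ℝ) (hε : 0 < ε)
    (clamp : Bool) (N : ℕ) (D D' : Fin N → I → Bool)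
    (hneighbour : ∀ r r' : Fin N, D r ≠ D' r → D r' ≠ D' r' → r = r')
    (B : Set (((i : I) × ({l // l ∈ π i} → Bool)) × Bool → ℝ)) :
    laplaceMech π ε clamp D B ≤ ENNReal.ofReal (Real.exp ε) * laplaceMech π ε clamp D' B := by
  set b : ℝ := 2 * Fintype.card I / ε
  set g : ℝ → ℝ := if clamp then fun x => max 0 (min x N) else id
  have hg : Measurable g := by cases clamp <;> dsimp [g] <;> fun_prop
  have hpost : Measurable fun v : ((i : I) × ({l // l ∈ π i} → Bool)) × Bool → ℝ => g ∘ v :=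
    measurable_pi_lambda _ fun p => hg.comp (measurable_pi_apply p)
  have hexponent : ∑ p, |updateVec π D p - updateVec π D' p| / b ≤ ε := calc
    ∑ p, |updateVec π D p - updateVec π D' p| / b ≤ 2 * Fintype.card I / b := by
      rw [← sum_div]
      gcongr
      exact sum_abs_updateVec_sub_le π D D' hneighbour
    _ ≤ ε := by
      rcases eq_or_ne (2 * Fintype.card I : ℝ) 0 with h | h
      · simp [h, hε.le]
      · rw [div_div_cancel₀ h]
  calc laplaceMech π ε clamp D B
      ≤ ENNReal.ofReal (Real.exp (∑ p, |updateVec π D p - updateVec π D' p| / b))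
          * laplaceMech π ε clamp D' B :=
        pi_laplaceMeasure_map_comp_add_le b hpost (updateVec π D) (updateVec π D') B
    _ ≤ ENNReal.ofReal (Real.exp ε) * laplaceMech π ε clamp D' B := by gcongr

/-- The Laplace mechanism on posterior updates (with or without clamping to `[0,N]`)
is `ε`-differentially private: for neighbouring datasets `D, D̃` and every measurable
set `B` of outputs, `Pr[M(D) ∈ B] ≤ e^ε · Pr[M(D̃) ∈ B]`. -/
theorem stmt_1 [Fintype I] [DecidableEq I] (π : I → Finset I) (ε : ℝ) (hε : 0 < ε)
    (clamp : Bool) (N : ℕ) (D D' : Fin N → I → Bool)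
    (hneighbour : ∀ r r' : Fin N, D r ≠ D' r → D r' ≠ D' r' → r = r')
    (B : Set (((i : I) × ({l // l ∈ π i} → Bool)) × Bool → ℝ)) (hB : MeasurableSet B) :
    laplaceMech π ε clamp D B ≤ ENNReal.ofReal (Real.exp ε) * laplaceMech π ε clamp D' B :=
  stmt_1_general π ε hε clamp N D D' hneighbour B
end

section
/- Let m ≥ 1 be a natural number, ε > 0, s > 0, and let W_1, …, W_{2m} be independent Laplace random variables each with scale s = 2|I|/ε (for a finite index set I). Then for every δ ∈ (0,1), with probability at least 1 − δ, max_{1 ≤ k ≤ 2m} |W_k| ≤ (2|I|/ε)·ln(2m/δ). Consequently the privately perturbed update counts Δω'(D) = Δω(D) + W satisfy ‖Δω(D) − Δω'(D)‖_∞ ≤ (2|I|/ε)·ln(2m/δ) with probability at least 1 − δ, where m = Σ_{i∈I} 2^{|π_i|} is the number of (i,j) pairs. -/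
open MeasureTheory Finset

variable {I : Type*}

/-! A Laplace variable `W` of scale `b` satisfies `P(|W| ≤ t) = 1 - exp(-t/b)`, so `n` independent
ones satisfy `P(max_k |W_k| ≤ t) = (1 - exp(-t/b))^n`. For `t = b log(n/δ)` this is
`(1 - δ/n)^n ≥ 1 - δ` by Bernoulli's inequality. Here `n = 2m`, and the perturbation of the
update counts is `W` itself. -/

lemma integral_exp_neg_div {b : ℝ} (hb : b ≠ 0) (t : ℝ) :
    ∫ x in (0 : ℝ)..t, Real.exp (-x / b) = b * (1 - Real.exp (-t / b)) := by
  have hderiv (x : ℝ) :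
      HasDerivAt (fun y => -b * Real.exp (-y / b)) (Real.exp (-x / b)) x :=
    (((hasDerivAt_neg x).div_const b).exp.const_mul (-b)).congr_deriv (by field_simp)
  rw [intervalIntegral.integral_eq_sub_of_hasDerivAt (fun x _ => hderiv x)
    (Continuous.intervalIntegrable (by fun_prop) _ _)]
  simp only [neg_zero, zero_div, Real.exp_zero]
  ring

lemma integral_laplaceDensity_neg_to_self {b : ℝ} (hb : b ≠ 0) {t : ℝ} (ht : 0 ≤ t) :
    ∫ x in -t..t, 1 / (2 * b) * Real.exp (-|x| / b) = 1 - Real.exp (-t / b) := by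
  have hintegrable (u v : ℝ) :
      IntervalIntegrable (fun x => Real.exp (-|x| / b)) volume u v :=
    Continuous.intervalIntegrable (by fun_prop) u v
  have hright :
      ∫ x in (0 : ℝ)..t, Real.exp (-|x| / b) = ∫ x in (0 : ℝ)..t, Real.exp (-x / b) := by
    refine intervalIntegral.integral_congr fun x hx => ?_
    rw [Set.uIcc_of_le ht] at hx
    simp only [abs_of_nonneg hx.1]
  have hleft :
      ∫ x in -t..0, Real.exp (-|x| / b) = ∫ x in (0 : ℝ)..t, Real.exp (-|x| / b) := by
    simpa using (intervalIntegral.integral_comp_neg (a := 0) (b := t)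
      (fun x => Real.exp (-|x| / b))).symm
  rw [intervalIntegral.integral_const_mul,
    ← intervalIntegral.integral_add_adjacent_intervals (hintegrable _ 0) (hintegrable 0 _),
    hleft, hright, integral_exp_neg_div hb]
  field_simp
  ring

lemma laplaceMeasure_abs_le {b : ℝ} (hb : 0 < b) {t : ℝ} (ht : 0 ≤ t) :
    laplaceMeasure b {x | |x| ≤ t} = ENNReal.ofReal (1 - Real.exp (-t / b)) := by
  have hIcc : {x : ℝ | |x| ≤ t} = Set.Icc (-t) t := by
    ext x
    simp [abs_le]
  rw [hIcc, laplaceMeasure, withDensity_apply _ measurableSet_Icc,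
    ← ofReal_integral_eq_lintegral_ofReal, integral_Icc_eq_integral_Ioc,
    ← intervalIntegral.integral_of_le (by linarith),
    integral_laplaceDensity_neg_to_self hb.ne' ht]
  · exact Continuous.integrableOn_Icc (by fun_prop)
  · exact Filter.Eventually.of_forall fun x => by positivity

instance inst_s2 (b : ℝ) : SigmaFinite (laplaceMeasure b) := by
  unfold laplaceMeasure
  infer_instance

lemma measure_pi_laplaceMeasure_forall_abs_le {ι : Type*} [Fintype ι] {b : ℝ} (hb : 0 < b)
    {t : ℝ} (ht : 0 ≤ t) :
    Measure.pi (fun _ : ι => laplaceMeasure b) {w | ∀ k, |w k| ≤ t} =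
      ENNReal.ofReal ((1 - Real.exp (-t / b)) ^ Fintype.card ι) := by
  have hpi : {w : ι → ℝ | ∀ k, |w k| ≤ t} = Set.univ.pi fun _ => {x | |x| ≤ t} := by
    ext w
    simp
  rw [hpi, Measure.pi_pi, Finset.prod_const, Finset.card_univ, laplaceMeasure_abs_le hb ht,
    ENNReal.ofReal_pow]
  rw [sub_nonneg, Real.exp_le_one_iff, neg_div, neg_nonpos]
  positivity

lemma one_sub_le_one_sub_div_pow {n : ℕ} (hn : n ≠ 0) {δ : ℝ} (hδ : δ ≤ 2 * n) :
    1 - δ ≤ (1 - δ / n) ^ n := by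
  have hn' : (0 : ℝ) < n := by exact_mod_cast Nat.pos_of_ne_zero hn
  calc 1 - δ = 1 + n * (-(δ / n)) := by field_simp; ring
    _ ≤ (1 + -(δ / n)) ^ n :=
      one_add_mul_le_pow (neg_le_neg ((div_le_iff₀ hn').2 (by linarith))) n
    _ = (1 - δ / n) ^ n := by ring

theorem ofReal_one_sub_le_measure_pi_laplaceMeasure {ι : Type*} [Fintype ι] [Nonempty ι]
    {b : ℝ} (hb : 0 < b) {δ : ℝ} (hδ0 : 0 < δ) (hδ1 : δ ≤ 1) :
    ENNReal.ofReal (1 - δ) ≤ Measure.pi (fun _ : ι => laplaceMeasure b)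
      {w | ∀ k, |w k| ≤ b * Real.log (Fintype.card ι / δ)} := by
  set n := Fintype.card ι
  have hn : (1 : ℝ) ≤ n := by exact_mod_cast Fintype.card_pos
  have hratio : 1 ≤ n / δ := by rw [le_div_iff₀ hδ0]; linarith
  have hexp : Real.exp (-(b * Real.log (n / δ)) / b) = δ / n := by
    rw [neg_div, mul_div_cancel_left₀ _ hb.ne', Real.exp_neg, Real.exp_log (by linarith), inv_div]
  rw [measure_pi_laplaceMeasure_forall_abs_le hb (mul_nonneg hb.le (Real.log_nonneg hratio)),
    hexp]
  exact ENNReal.ofReal_le_ofReal (one_sub_le_one_sub_div_pow Fintype.card_ne_zero (by linarith))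

/-- Let `W` be a vector of `2m` i.i.d. Laplace random variables with scale `2|I|/ε`,
where `m = Σ_{i∈I} 2^{|π_i|}` is the number of `(i,j)` pairs.  Then for every
`δ ∈ (0,1)`, with probability at least `1 − δ`, `max_k |W_k| ≤ (2|I|/ε)·ln(2m/δ)`;
consequently the perturbed update counts `Δω'(D) = Δω(D) + W` satisfy
`‖Δω(D) − Δω'(D)‖_∞ ≤ (2|I|/ε)·ln(2m/δ)` with probability at least `1 − δ`. -/
theorem stmt_2 [Fintype I] [DecidableEq I] (π : I → Finset I) (ε : ℝ) (hε : 0 < ε)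
    (δ : ℝ) (hδ : δ ∈ Set.Ioo (0 : ℝ) 1) (N : ℕ) (D : Fin N → I → Bool)
    (m : ℕ) (hm : m = ∑ i : I, 2 ^ (π i).card)
    (P : Measure (((i : I) × ({l // l ∈ π i} → Bool)) × Bool → ℝ))
    (hP : P = Measure.pi fun _ => laplaceMeasure (2 * Fintype.card I / ε)) :
    ENNReal.ofReal (1 - δ) ≤
      P {w | ∀ k, |w k| ≤ 2 * Fintype.card I / ε * Real.log (2 * m / δ)} ∧
    ENNReal.ofReal (1 - δ) ≤
      P {w | ∀ k, |updateVec π D k - (updateVec π D k + w k)| ≤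
          2 * Fintype.card I / ε * Real.log (2 * m / δ)} := by
  simp only [sub_add_cancel_left, abs_neg, and_self]
  rcases isEmpty_or_nonempty I with hI | hI
  · -- the scale `2|I|/ε` is then `0`, but an empty product of measures is a Dirac mass
    rw [hP, Measure.pi_of_empty, Measure.dirac_apply_of_mem fun k => isEmptyElim k]
    exact ENNReal.ofReal_le_one.2 (by linarith [hδ.1])
  have : Nonempty (((i : I) × ({l // l ∈ π i} → Bool)) × Bool) :=
    ⟨(⟨hI.some, fun _ => true⟩, true)⟩
  have hcard :
      (Fintype.card (((i : I) × ({l // l ∈ π i} → Bool)) × Bool) : ℝ) = 2 * m := by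
    simp [Fintype.card_sigma, hm, mul_comm]
  have hcardI : (0 : ℝ) < Fintype.card I := by exact_mod_cast Fintype.card_pos
  rw [hP, ← hcard]
  exact ofReal_one_sub_le_measure_pi_laplaceMeasure (by positivity) hδ.1 hδ.2.le
end

section
/- Let n ≥ 1 be a natural number, let α, β ≥ 2 be real numbers, and let Δα, Δβ be natural numbers with Δα ≤ n and Δβ ≤ n. Define f(z_1, z_2) = ln( Γ(α+Δα)·Γ(β+Δβ) / (Γ(α+z_1)·Γ(β+z_2)) ) + (Δα − z_1)·ψ(α+Δα) + (Δβ − z_2)·ψ(β+Δβ). Then for all z = (z_1, z_2) and z' = (z_1', z_2') in [0, n]², |f(z_1, z_2) − f(z_1', z_2')| ≤ (2n+1)·( ln(α+n+1) + ln(β+n+1) ). -/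
/-- The digamma function `ψ(x) = Γ'(x)/Γ(x)`, the derivative of `ln ∘ Γ`. -/
noncomputable def digamma (x : ℝ) : ℝ := deriv (fun y : ℝ => Real.log (Real.Gamma y)) x

open Real Set

private lemma lg_diffAt {x : ℝ} (hx : 0 < x) :
    DifferentiableAt ℝ (fun y : ℝ => Real.log (Real.Gamma y)) x := by
  refine (Real.differentiableAt_Gamma ?_).log (Real.Gamma_ne_zero ?_) <;>
    exact fun m => by
      have : (0:ℝ) ≤ (m:ℝ) := Nat.cast_nonneg m
      intro h; rw [h] at hx; linarith

private lemma lg_slope_add_one {x : ℝ} (hx : 0 < x) :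
    slope (fun y : ℝ => Real.log (Real.Gamma y)) x (x + 1) = Real.log x := by
  rw [slope_def_field]
  field_simp
  rw [Real.Gamma_add_one hx.ne', Real.log_mul hx.ne' (Real.Gamma_pos_of_pos hx).ne']
  ring

private lemma lg_diff_bounds {a b : ℝ} (ha : 2 ≤ a) (hab : a ≤ b) :
    0 ≤ Real.log (Real.Gamma b) - Real.log (Real.Gamma a) ∧
      Real.log (Real.Gamma b) - Real.log (Real.Gamma a) ≤ (b - a) * Real.log b := by
  rcases eq_or_lt_of_le hab with rfl | hab
  · simp
  set L : ℝ → ℝ := fun y => Real.log (Real.Gamma y) with hL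
  have hc : ConvexOn ℝ (Ioi 0) L := Real.convexOn_log_Gamma
  have ha0 : (0:ℝ) < a := by linarith
  have hb0 : (0:ℝ) < b := by linarith
  have ha1 : (0:ℝ) < a - 1 := by linarith
  have hma : a ∈ Ioi (0:ℝ) := ha0
  have hmb : b ∈ Ioi (0:ℝ) := hb0
  -- lower bound on slope
  have h1 : Real.log (a - 1) ≤ slope L a b := by
    have h1a : slope L (a-1) ((a-1)+1) = Real.log (a-1) := lg_slope_add_one ha1
    have h1b : slope L (a-1) a ≤ deriv L a :=
      hc.slope_le_deriv (by exact ha1) hma (by linarith) (lg_diffAt ha0)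
    have h1c : deriv L a ≤ slope L a b := hc.deriv_le_slope hma hmb hab (lg_diffAt ha0)
    have : (a - 1) + 1 = a := by ring
    rw [this] at h1a
    linarith
  have h2 : slope L a b ≤ Real.log b := by
    have h2a : slope L b (b+1) = Real.log b := lg_slope_add_one hb0
    have h2b : slope L a b ≤ deriv L b := hc.slope_le_deriv hma hmb hab (lg_diffAt hb0)
    have h2c : deriv L b ≤ slope L b (b+1) :=
      hc.deriv_le_slope hmb (by simp; linarith) (by linarith) (lg_diffAt hb0)
    linarith
  have hslope : slope L a b = (L b - L a) / (b - a) := by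
    rw [slope_def_field]
  have hba : (0:ℝ) < b - a := by linarith
  have hlog1 : 0 ≤ Real.log (a - 1) := Real.log_nonneg (by linarith)
  constructor
  · have h0 : 0 ≤ (L b - L a) / (b - a) := le_trans hlog1 (hslope ▸ h1)
    have h4 := (le_div_iff₀ hba).mp h0
    linarith
  · have h3 := (div_le_iff₀ hba).mp (hslope ▸ h2)
    linarith [mul_comm (Real.log b) (b - a), h3]

private lemma digamma_bounds {x : ℝ} (hx : 2 ≤ x) :
    0 ≤ deriv (fun y : ℝ => Real.log (Real.Gamma y)) x ∧
      deriv (fun y : ℝ => Real.log (Real.Gamma y)) x ≤ Real.log x := by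
  set L : ℝ → ℝ := fun y => Real.log (Real.Gamma y)
  have hc : ConvexOn ℝ (Ioi 0) L := Real.convexOn_log_Gamma
  have hx0 : (0:ℝ) < x := by linarith
  have hx1 : (0:ℝ) < x - 1 := by linarith
  have h1 : slope L (x-1) x ≤ deriv L x :=
    hc.slope_le_deriv (by exact hx1) (by exact hx0) (by linarith) (lg_diffAt hx0)
  have h2 : deriv L x ≤ slope L x (x+1) :=
    hc.deriv_le_slope (by exact hx0) (by simp; linarith) (by linarith) (lg_diffAt hx0)
  have e1 : slope L (x-1) ((x-1)+1) = Real.log (x-1) := lg_slope_add_one hx1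
  have e2 : slope L x (x+1) = Real.log x := lg_slope_add_one hx0
  have : (x-1)+1 = x := by ring
  rw [this] at e1
  exact ⟨le_trans (Real.log_nonneg (by linarith)) (e1 ▸ h1), e2 ▸ h2⟩

private lemma abs_lg_diff {a b c : ℝ} (ha : 2 ≤ a) (hb : 2 ≤ b) (hac : a ≤ c) (hbc : b ≤ c) :
    |Real.log (Real.Gamma a) - Real.log (Real.Gamma b)| ≤ |a - b| * Real.log c := by
  wlog hab : b ≤ a generalizing a b
  · rw [abs_sub_comm, abs_sub_comm a b]
    exact this hb ha hbc hac (le_of_not_ge hab)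
  obtain ⟨h0, h1⟩ := lg_diff_bounds hb hab
  have hla : Real.log a ≤ Real.log c := Real.log_le_log (by linarith) hac
  have hab' : (0:ℝ) ≤ a - b := by linarith
  rw [abs_of_nonneg h0, abs_of_nonneg hab']
  calc Real.log (Real.Gamma a) - Real.log (Real.Gamma b) ≤ (a - b) * Real.log a := h1
    _ ≤ (a - b) * Real.log c := mul_le_mul_of_nonneg_left hla hab'


/-- Let `n ≥ 1`, `α, β ≥ 2`, and `Δα, Δβ ∈ ℕ` with `Δα ≤ n`, `Δβ ≤ n`.  With
`f(z₁,z₂) = ln(Γ(α+Δα)Γ(β+Δβ)/(Γ(α+z₁)Γ(β+z₂))) + (Δα−z₁)ψ(α+Δα) + (Δβ−z₂)ψ(β+Δβ)`,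
for all `(z₁,z₂), (z₁',z₂') ∈ [0,n]²` one has
`|f(z₁,z₂) − f(z₁',z₂')| ≤ (2n+1)·(ln(α+n+1) + ln(β+n+1))`. -/
theorem stmt_6 (n : ℕ) (hn : 1 ≤ n) (α β : ℝ) (hα : 2 ≤ α) (hβ : 2 ≤ β)
    (Δα Δβ : ℕ) (hΔα : Δα ≤ n) (hΔβ : Δβ ≤ n)
    (f : ℝ → ℝ → ℝ)
    (hf : ∀ z₁ z₂ : ℝ, f z₁ z₂ =
      Real.log (Real.Gamma (α + Δα) * Real.Gamma (β + Δβ) /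
          (Real.Gamma (α + z₁) * Real.Gamma (β + z₂)))
        + (Δα - z₁) * digamma (α + Δα) + (Δβ - z₂) * digamma (β + Δβ))
    (z₁ z₂ z₁' z₂' : ℝ)
    (h₁ : z₁ ∈ Set.Icc (0 : ℝ) n) (h₂ : z₂ ∈ Set.Icc (0 : ℝ) n)
    (h₁' : z₁' ∈ Set.Icc (0 : ℝ) n) (h₂' : z₂' ∈ Set.Icc (0 : ℝ) n) :
    |f z₁ z₂ - f z₁' z₂'| ≤
      (2 * n + 1) * (Real.log (α + n + 1) + Real.log (β + n + 1)) := by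
  obtain ⟨hz₁0, hz₁n⟩ := h₁
  obtain ⟨hz₂0, hz₂n⟩ := h₂
  obtain ⟨hz₁0', hz₁n'⟩ := h₁'
  obtain ⟨hz₂0', hz₂n'⟩ := h₂'
  set A := Real.log (α + n + 1) with hA
  set B := Real.log (β + n + 1) with hB
  have hn1 : (1:ℝ) ≤ (n:ℝ) := by exact_mod_cast hn
  have hA0 : 0 ≤ A := Real.log_nonneg (by linarith)
  have hB0 : 0 ≤ B := Real.log_nonneg (by linarith)
  -- split the log of the quotient
  have hsplit : ∀ u v : ℝ, 0 ≤ u → 0 ≤ v →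
      Real.log (Real.Gamma (α + Δα) * Real.Gamma (β + Δβ) /
          (Real.Gamma (α + u) * Real.Gamma (β + v))) =
      Real.log (Real.Gamma (α + Δα)) + Real.log (Real.Gamma (β + Δβ))
        - Real.log (Real.Gamma (α + u)) - Real.log (Real.Gamma (β + v)) := by
    intro u v hu hv
    have p1 : 0 < Real.Gamma (α + Δα) := Real.Gamma_pos_of_pos (by positivity)
    have p2 : 0 < Real.Gamma (β + Δβ) := Real.Gamma_pos_of_pos (by positivity)
    have p3 : 0 < Real.Gamma (α + u) := Real.Gamma_pos_of_pos (by linarith)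
    have p4 : 0 < Real.Gamma (β + v) := Real.Gamma_pos_of_pos (by linarith)
    rw [Real.log_div (by positivity) (by positivity), Real.log_mul p1.ne' p2.ne',
      Real.log_mul p3.ne' p4.ne']
    ring
  -- rewrite the difference
  have hD : f z₁ z₂ - f z₁' z₂' =
      (Real.log (Real.Gamma (α + z₁')) - Real.log (Real.Gamma (α + z₁)))
      + (Real.log (Real.Gamma (β + z₂')) - Real.log (Real.Gamma (β + z₂)))
      + (z₁' - z₁) * digamma (α + Δα) + (z₂' - z₂) * digamma (β + Δβ) := by
    rw [hf, hf, hsplit z₁ z₂ hz₁0 hz₂0, hsplit z₁' z₂' hz₁0' hz₂0']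
    ring
  -- bounds for each term
  have habs : ∀ w w' : ℝ, 0 ≤ w → w ≤ n → 0 ≤ w' → w' ≤ n → |w' - w| ≤ (n:ℝ) := by
    intro w w' a1 a2 a3 a4
    rw [abs_le]; constructor <;> linarith
  have hT1 : |Real.log (Real.Gamma (α + z₁')) - Real.log (Real.Gamma (α + z₁))| ≤ n * A := by
    have := abs_lg_diff (a := α + z₁') (b := α + z₁) (c := α + n + 1)
      (by linarith) (by linarith) (by linarith) (by linarith)
    have he : α + z₁' - (α + z₁) = z₁' - z₁ := by ring
    rw [he] at this
    calc |Real.log (Real.Gamma (α + z₁')) - Real.log (Real.Gamma (α + z₁))|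
        ≤ |z₁' - z₁| * A := this
      _ ≤ n * A := mul_le_mul_of_nonneg_right (habs _ _ hz₁0 hz₁n hz₁0' hz₁n') hA0
  have hT2 : |Real.log (Real.Gamma (β + z₂')) - Real.log (Real.Gamma (β + z₂))| ≤ n * B := by
    have := abs_lg_diff (a := β + z₂') (b := β + z₂) (c := β + n + 1)
      (by linarith) (by linarith) (by linarith) (by linarith)
    have he : β + z₂' - (β + z₂) = z₂' - z₂ := by ring
    rw [he] at this
    calc |Real.log (Real.Gamma (β + z₂')) - Real.log (Real.Gamma (β + z₂))|
        ≤ |z₂' - z₂| * B := this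
      _ ≤ n * B := mul_le_mul_of_nonneg_right (habs _ _ hz₂0 hz₂n hz₂0' hz₂n') hB0
  have hΔα' : (Δα : ℝ) ≤ n := by exact_mod_cast hΔα
  have hΔβ' : (Δβ : ℝ) ≤ n := by exact_mod_cast hΔβ
  have hΔα0 : (0:ℝ) ≤ (Δα:ℝ) := Nat.cast_nonneg _
  have hΔβ0 : (0:ℝ) ≤ (Δβ:ℝ) := Nat.cast_nonneg _
  have hψα := digamma_bounds (x := α + Δα) (by linarith)
  have hψβ := digamma_bounds (x := β + Δβ) (by linarith)
  have hψαA : |digamma (α + Δα)| ≤ A := by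
    rw [digamma, abs_of_nonneg hψα.1]
    exact hψα.2.trans (Real.log_le_log (by linarith) (by linarith))
  have hψβB : |digamma (β + Δβ)| ≤ B := by
    rw [digamma, abs_of_nonneg hψβ.1]
    exact hψβ.2.trans (Real.log_le_log (by linarith) (by linarith))
  have hT3 : |(z₁' - z₁) * digamma (α + Δα)| ≤ n * A := by
    rw [abs_mul]
    exact mul_le_mul (habs _ _ hz₁0 hz₁n hz₁0' hz₁n') hψαA (abs_nonneg _) (by linarith)
  have hT4 : |(z₂' - z₂) * digamma (β + Δβ)| ≤ n * B := by
    rw [abs_mul]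
    exact mul_le_mul (habs _ _ hz₂0 hz₂n hz₂0' hz₂n') hψβB (abs_nonneg _) (by linarith)
  rw [hD]
  calc |_ + _ + _ + _| ≤ |_ + _ + _| + |(z₂' - z₂) * digamma (β + Δβ)| := abs_add_le _ _
    _ ≤ (|_ + _| + |(z₁' - z₁) * digamma (α + Δα)|) + _ := by
        gcongr; exact abs_add_le _ _
    _ ≤ ((|Real.log (Real.Gamma (α + z₁')) - Real.log (Real.Gamma (α + z₁))| +
          |Real.log (Real.Gamma (β + z₂')) - Real.log (Real.Gamma (β + z₂))|) + _) + _ := by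
        gcongr; exact abs_add_le _ _
    _ ≤ ((n * A + n * B) + n * A) + n * B := by gcongr <;> assumption
    _ ≤ (2 * n + 1) * (A + B) := by nlinarith
end

section
/- Let k be a natural number, S ⊆ {0,1}^k a nonempty finite set, and ε > 0. Let M be the randomised mechanism that, given a dataset D of records in {0,1}^k with contingency table h(D), outputs the vector ( ⟨f^γ, h(D)⟩ + X_γ )_{γ ∈ S}, where the X_γ are independent Laplace random variables with scale 2|S|·ε^{−1}·2^{−k/2}. Then M is ε-differentially private: for any two neighbouring datasets D, D̃ (differing in at most one record) and any measurable set B ⊆ ℝ^S, Pr[M(D) ∈ B] ≤ e^ε · Pr[M(D̃) ∈ B]. -/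
open MeasureTheory Finset

/-- `⟨γ,j⟩ = Σ_i γ_i j_i` on the Boolean hypercube `{0,1}^k`. -/
def cubeInner {k : ℕ} (γ j : Fin k → Bool) : ℕ :=
  (Finset.univ.filter fun i => γ i = true ∧ j i = true).card

/-- The Fourier basis vector `f^j`, with `f^j_γ = (−1)^{⟨γ,j⟩}·2^{−k/2}`. -/
noncomputable def cubeFourier {k : ℕ} (j γ : Fin k → Bool) : ℝ :=
  (-1 : ℝ) ^ cubeInner γ j * (2 : ℝ) ^ (-(k : ℝ) / 2)

/-- The inner product of two tables, `⟨f,h⟩ = Σ_η f_η h_η`. -/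
noncomputable def tdot {k : ℕ} (f h : (Fin k → Bool) → ℝ) : ℝ := ∑ η, f η * h η

/-- The contingency table of a dataset `D` of records in `{0,1}^k`: cell `η` holds
the number of records equal to `η`. -/
def ctab {k N : ℕ} (D : Fin N → Fin k → Bool) (η : Fin k → Bool) : ℝ :=
  ((Finset.univ.filter fun r : Fin N => D r = η).card : ℝ)

/-- The mechanism releasing, for each `γ ∈ S`, the Fourier coefficient
`⟨f^γ, h(D)⟩` perturbed by independent Laplace noise of scale `2|S|·ε⁻¹·2^{−k/2}`. -/
noncomputable def fourierMech {k : ℕ} (S : Finset (Fin k → Bool)) (ε : ℝ) {N : ℕ}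
    (D : Fin N → Fin k → Bool) : Measure (↥S → ℝ) :=
  (Measure.pi fun _ : ↥S =>
      laplaceMeasure (2 * S.card / ε * (2 : ℝ) ^ (-(k : ℝ) / 2))).map
    fun w γ => tdot (cubeFourier γ.1) (ctab D) + w γ

/- ### Auxiliary lemmas -/

open scoped ENNReal

/-- Tonelli for a product of single-coordinate functions, `Fin n` version. -/
private lemma lintegral_pi_prod_fin :
    ∀ {n : ℕ} (f : Fin n → ℝ → ℝ≥0∞), (∀ i, Measurable (f i)) →
      ∫⁻ x : Fin n → ℝ, ∏ i, f i (x i) ∂(Measure.pi fun _ => (volume : Measure ℝ)) =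
        ∏ i, ∫⁻ y, f i y := by
  intro n
  induction n with
  | zero =>
    intro f hf
    simp [Measure.pi_of_empty (fun _ : Fin 0 => (volume : Measure ℝ))]
  | succ n ih =>
    intro f hf
    have h := (measurePreserving_piFinSuccAbove (fun _ : Fin (n + 1) => (volume : Measure ℝ))
      0).symm
    rw [h.lintegral_map_equiv (fun x => ∏ i, f i (x i)) _]
    simp_rw [MeasurableEquiv.piFinSuccAbove_symm_apply, Fin.insertNthEquiv, Equiv.coe_fn_mk]
    have hc : ∀ (a : ℝ × (Fin n → ℝ)) (x : Fin (n + 1)),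
        f x ((Fin.insertNth (α := fun _ => ℝ) 0 a.1 a.2) x) =
          f x ((Fin.cons a.1 a.2 : Fin (n + 1) → ℝ) x) := by
      intro a x; rw [Fin.insertNth_zero]; simp
    simp_rw [hc, Fin.prod_univ_succ, Fin.cons_zero, Fin.cons_succ]
    rw [lintegral_prod_mul (f := f 0) (g := fun y : Fin n → ℝ => ∏ i, f i.succ (y i))
      (hf 0).aemeasurable
      ((Finset.measurable_prod Finset.univ fun i _ =>
        (hf i.succ).comp (measurable_pi_apply i)).aemeasurable),
      ih (fun i => f i.succ) (fun i => hf i.succ)]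

/-- Tonelli for a product of single-coordinate functions, general finite index type. -/
private lemma lintegral_pi_prod {ι : Type*} [Fintype ι] (f : ι → ℝ → ℝ≥0∞)
    (hf : ∀ i, Measurable (f i)) :
    ∫⁻ x : ι → ℝ, ∏ i, f i (x i) ∂(Measure.pi fun _ => (volume : Measure ℝ)) =
      ∏ i, ∫⁻ y, f i y := by
  let e := (Fintype.equivFin ι).symm
  rw [(measurePreserving_piCongrLeft (fun _ : ι => (volume : Measure ℝ)) e).lintegral_map_equiv
    (fun x => ∏ i, f i (x i)) _]
  have hc : ∀ a : Fin (Fintype.card ι) → ℝ,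
      ∏ i, f i ((MeasurableEquiv.piCongrLeft (fun _ : ι => ℝ) e) a i) =
        ∏ j, f (e j) (a j) := by
    intro a
    rw [← e.prod_comp fun i => f i ((MeasurableEquiv.piCongrLeft (fun _ : ι => ℝ) e) a i)]
    refine Finset.prod_congr rfl fun j _ => ?_
    rw [MeasurableEquiv.coe_piCongrLeft, Equiv.piCongrLeft_apply_apply]
  simp_rw [hc]
  rw [lintegral_pi_prod_fin (fun j => f (e j)) (fun j => hf (e j))]
  exact e.prod_comp fun i => ∫⁻ y, f i y

/-- A finite product of `withDensity` measures is `withDensity` of the product density. -/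
private lemma pi_withDensity_ofReal {ι : Type*} [Fintype ι] (g : ι → ℝ → ℝ)
    (hg : ∀ i, Measurable (g i)) :
    (Measure.pi fun i => (volume : Measure ℝ).withDensity fun x => ENNReal.ofReal (g i x)) =
      (Measure.pi fun _ : ι => (volume : Measure ℝ)).withDensity
        fun x => ∏ i, ENNReal.ofReal (g i (x i)) := by
  refine (Measure.pi_eq (μ := fun i => (volume : Measure ℝ).withDensity fun x => ENNReal.ofReal (g i x))
    (μ' := (Measure.pi fun _ : ι => (volume : Measure ℝ)).withDensity
    fun x => ∏ i, ENNReal.ofReal (g i (x i))) fun s hs => ?_)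
  rw [withDensity_apply _ (MeasurableSet.univ_pi hs),
    ← lintegral_indicator (MeasurableSet.univ_pi hs)]
  have hind : ∀ x : ι → ℝ,
      (Set.univ.pi s).indicator (fun x => ∏ i, ENNReal.ofReal (g i (x i))) x =
        ∏ i, (s i).indicator (fun y => ENNReal.ofReal (g i y)) (x i) := by
    intro x
    by_cases hx : x ∈ Set.univ.pi s
    · rw [Set.indicator_of_mem hx]
      exact Finset.prod_congr rfl fun i _ =>
        (Set.indicator_of_mem (hx i (Set.mem_univ i))
          (fun y => ENNReal.ofReal (g i y))).symm
    · rw [Set.indicator_of_notMem hx]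
      rw [Set.mem_univ_pi] at hx
      push_neg at hx
      obtain ⟨i, hi⟩ := hx
      exact (Finset.prod_eq_zero (Finset.mem_univ i)
        (by rw [Set.indicator_of_notMem hi])).symm
  simp_rw [hind]
  rw [lintegral_pi_prod _ (fun i => ((hg i).ennreal_ofReal).indicator (hs i))]
  exact Finset.prod_congr rfl fun i _ => by
    rw [lintegral_indicator (hs i), withDensity_apply _ (hs i)]

/-- `⟨f, h(D)⟩ = Σ_r f(D r)`. -/
private lemma tdot_ctab {k N : ℕ} (f : (Fin k → Bool) → ℝ) (D : Fin N → Fin k → Bool) :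
    tdot f (ctab D) = ∑ r, f (D r) := by
  classical
  rw [tdot, ← Finset.sum_fiberwise_of_maps_to' (g := D) (t := Finset.univ)
    (fun r _ => Finset.mem_univ (D r)) f]
  refine Finset.sum_congr rfl fun η _ => ?_
  rw [Finset.sum_const, nsmul_eq_mul, ctab, mul_comm]

/-- Sensitivity bound for the Fourier coefficients of neighbouring datasets. -/
private lemma sens {k N : ℕ} (γ : Fin k → Bool) (D D' : Fin N → Fin k → Bool)
    (hneighbour : ∀ r r' : Fin N, D r ≠ D' r → D r' ≠ D' r' → r = r') :
    |tdot (cubeFourier γ) (ctab D) - tdot (cubeFourier γ) (ctab D')| ≤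
      2 * (2 : ℝ) ^ (-(k : ℝ) / 2) := by
  have h2k : (0 : ℝ) < (2 : ℝ) ^ (-(k : ℝ) / 2) := Real.rpow_pos_of_pos two_pos _
  have habs : ∀ η, |cubeFourier γ η| = (2 : ℝ) ^ (-(k : ℝ) / 2) := by
    intro η
    rw [cubeFourier, abs_mul, abs_pow, abs_neg, abs_one, one_pow, one_mul, abs_of_pos h2k]
  rw [tdot_ctab, tdot_ctab, ← Finset.sum_sub_distrib]
  by_cases hD : D = D'
  · subst hD; simp; positivity
  · obtain ⟨r0, hr0⟩ := Function.ne_iff.mp hD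
    have hothers : ∀ r, r ≠ r0 → cubeFourier γ (D r) - cubeFourier γ (D' r) = 0 := by
      intro r hr
      by_cases h : D r = D' r
      · rw [h, sub_self]
      · exact absurd (hneighbour r r0 h hr0) hr
    rw [Finset.sum_eq_single r0 (fun r _ hr => hothers r hr)
      (fun h => absurd (Finset.mem_univ r0) h)]
    calc |cubeFourier γ (D r0) - cubeFourier γ (D' r0)|
        ≤ |cubeFourier γ (D r0)| + |cubeFourier γ (D' r0)| := abs_sub _ _
      _ = 2 * (2 : ℝ) ^ (-(k : ℝ) / 2) := by rw [habs, habs]; ring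

/-- One-coordinate density comparison for the Laplace density. -/
private lemma laplace_dens_le {b : ℝ} (hb : 0 < b) (t x : ℝ) :
    1 / (2 * b) * Real.exp (-|t + x| / b) ≤
      Real.exp (|t| / b) * (1 / (2 * b) * Real.exp (-|x| / b)) := by
  have h1 : |x| ≤ |t + x| + |t| := by
    have h := abs_add_le (t + x) (-t)
    simp only [add_neg_cancel_right, abs_neg] at h
    simpa using h
  have h2 : -|t + x| / b ≤ (|t| - |x|) / b := by
    gcongr
    linarith
  calc 1 / (2 * b) * Real.exp (-|t + x| / b)
      ≤ 1 / (2 * b) * Real.exp ((|t| - |x|) / b) := by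
        have hpos : (0 : ℝ) ≤ 1 / (2 * b) := by positivity
        exact mul_le_mul_of_nonneg_left (Real.exp_le_exp.mpr h2) hpos
    _ = Real.exp (|t| / b) * (1 / (2 * b) * Real.exp (-|x| / b)) := by
        rw [show (|t| - |x|) / b = |t| / b + -|x| / b by ring, Real.exp_add]
        ring

/-- The key differential-privacy estimate for a product of translated Laplace measures. -/
private lemma laplace_dp {ι : Type*} [Fintype ι] {b : ℝ} (hb : 0 < b) (c c' : ι → ℝ) {E : ℝ}
    (hsum : ∑ i, |c' i - c i| ≤ E * b) {B : Set (ι → ℝ)} (hB : MeasurableSet B) :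
    ((Measure.pi fun _ : ι => laplaceMeasure b).map fun w i => c i + w i) B ≤
      ENNReal.ofReal (Real.exp E) *
        ((Measure.pi fun _ : ι => laplaceMeasure b).map fun w i => c' i + w i) B := by
  classical
  have hdR : Measurable fun x : ℝ => 1 / (2 * b) * Real.exp (-|x| / b) := by fun_prop
  have hT : ∀ cc : ι → ℝ, Measurable fun (w : ι → ℝ) i => cc i + w i := fun cc =>
    measurable_pi_lambda _ fun i => measurable_const.add (measurable_pi_apply i)
  set μ0 : Measure (ι → ℝ) := Measure.pi fun _ => volume with hμ0
  set g : (ι → ℝ) → ℝ≥0∞ :=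
    fun w => ∏ i, ENNReal.ofReal (1 / (2 * b) * Real.exp (-|w i| / b)) with hgdef
  have hgmeas : Measurable g :=
    Finset.measurable_prod _ fun i _ => (hdR.comp (measurable_pi_apply i)).ennreal_ofReal
  have hpi : (Measure.pi fun _ : ι => laplaceMeasure b) = μ0.withDensity g := by
    simp only [laplaceMeasure]
    exact pi_withDensity_ofReal _ fun _ => hdR
  have hrep : ∀ cc : ι → ℝ,
      ((Measure.pi fun _ : ι => laplaceMeasure b).map fun w i => cc i + w i) B =
        ∫⁻ w, ((fun (w : ι → ℝ) i => cc i + w i) ⁻¹' B).indicator g w ∂μ0 := by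
    intro cc
    rw [Measure.map_apply (hT cc) hB, hpi, withDensity_apply _ ((hT cc) hB),
      lintegral_indicator ((hT cc) hB)]
  rw [hrep c, hrep c']
  set d : ι → ℝ := fun i => c' i - c i with hd
  have htrans :
      ∫⁻ w, ((fun (w : ι → ℝ) i => c i + w i) ⁻¹' B).indicator g w ∂μ0 =
        ∫⁻ w, ((fun (w : ι → ℝ) i => c i + w i) ⁻¹' B).indicator g (d + w) ∂μ0 :=
    (lintegral_add_left_eq_self
      (fun w => ((fun (w : ι → ℝ) i => c i + w i) ⁻¹' B).indicator g w) d).symm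
  rw [htrans]
  have hmem : ∀ w : ι → ℝ,
      ((fun (w : ι → ℝ) i => c i + w i) ⁻¹' B).indicator g (d + w) =
        ((fun (w : ι → ℝ) i => c' i + w i) ⁻¹' B).indicator (fun w => g (d + w)) w := by
    intro w
    have heq : (fun i => c i + (d + w) i) = fun i => c' i + w i := by
      funext i; simp [hd]; ring
    by_cases h : w ∈ (fun (w : ι → ℝ) i => c' i + w i) ⁻¹' B
    · rw [Set.indicator_of_mem h, Set.indicator_of_mem]
      exact Set.mem_preimage.mpr (by rw [heq]; exact h)
    · rw [Set.indicator_of_notMem h, Set.indicator_of_notMem]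
      exact fun hmem => h (Set.mem_preimage.mpr (by rw [← heq]; exact hmem))
  simp_rw [hmem]
  have hbound : ∀ w : ι → ℝ, g (d + w) ≤ ENNReal.ofReal (Real.exp E) * g w := by
    intro w
    have h1 : g (d + w) ≤
        ∏ i, (ENNReal.ofReal (Real.exp (|d i| / b)) *
          ENNReal.ofReal (1 / (2 * b) * Real.exp (-|w i| / b))) := by
      refine Finset.prod_le_prod' fun i _ => ?_
      rw [← ENNReal.ofReal_mul (Real.exp_nonneg _)]
      exact ENNReal.ofReal_le_ofReal (laplace_dens_le hb (d i) (w i))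
    refine h1.trans ?_
    rw [Finset.prod_mul_distrib]
    refine mul_le_mul_left ?_ _
    rw [← ENNReal.ofReal_prod_of_nonneg (fun i _ => Real.exp_nonneg _), ← Real.exp_sum]
    refine ENNReal.ofReal_le_ofReal (Real.exp_le_exp.mpr ?_)
    rw [← Finset.sum_div]
    rw [div_le_iff₀ hb]
    exact hsum
  calc ∫⁻ w, ((fun (w : ι → ℝ) i => c' i + w i) ⁻¹' B).indicator (fun w => g (d + w)) w ∂μ0
      ≤ ∫⁻ w, ENNReal.ofReal (Real.exp E) *
          ((fun (w : ι → ℝ) i => c' i + w i) ⁻¹' B).indicator g w ∂μ0 := by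
        refine lintegral_mono fun w => ?_
        by_cases h : w ∈ (fun (w : ι → ℝ) i => c' i + w i) ⁻¹' B
        · rw [Set.indicator_of_mem h, Set.indicator_of_mem h]; exact hbound w
        · rw [Set.indicator_of_notMem h, Set.indicator_of_notMem h, mul_zero]
    _ = ENNReal.ofReal (Real.exp E) *
          ∫⁻ w, ((fun (w : ι → ℝ) i => c' i + w i) ⁻¹' B).indicator g w ∂μ0 :=
        lintegral_const_mul' _ _ ENNReal.ofReal_ne_top

/-- Releasing the Fourier coefficients `⟨f^γ, h(D)⟩ + Lap(2|S|·ε⁻¹·2^{−k/2})` for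
`γ ∈ S` is `ε`-differentially private: for neighbouring datasets `D, D̃` and every
measurable `B ⊆ ℝ^S`, `Pr[M(D) ∈ B] ≤ e^ε · Pr[M(D̃) ∈ B]`. -/
theorem stmt_9 (k : ℕ) (S : Finset (Fin k → Bool)) (hS : S.Nonempty)
    (ε : ℝ) (hε : 0 < ε) (N : ℕ) (D D' : Fin N → Fin k → Bool)
    (hneighbour : ∀ r r' : Fin N, D r ≠ D' r → D r' ≠ D' r' → r = r')
    (B : Set (↥S → ℝ)) (hB : MeasurableSet B) :
    fourierMech S ε D B ≤ ENNReal.ofReal (Real.exp ε) * fourierMech S ε D' B := by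
  classical
  have hcard : (0 : ℝ) < S.card := by exact_mod_cast hS.card_pos
  have h2k : (0 : ℝ) < (2 : ℝ) ^ (-(k : ℝ) / 2) := Real.rpow_pos_of_pos two_pos _
  have hb : 0 < 2 * (S.card : ℝ) / ε * (2 : ℝ) ^ (-(k : ℝ) / 2) :=
    mul_pos (div_pos (by linarith) hε) h2k
  have hneighbour' : ∀ r r' : Fin N, D' r ≠ D r → D' r' ≠ D r' → r = r' := fun r r' h h' =>
    hneighbour r r' (Ne.symm h) (Ne.symm h')
  have hsum : ∑ γ : ↥S, |tdot (cubeFourier (γ : Fin k → Bool)) (ctab D') -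
      tdot (cubeFourier (γ : Fin k → Bool)) (ctab D)| ≤
        ε * (2 * S.card / ε * (2 : ℝ) ^ (-(k : ℝ) / 2)) := by
    calc ∑ γ : ↥S, |tdot (cubeFourier (γ : Fin k → Bool)) (ctab D') -
        tdot (cubeFourier (γ : Fin k → Bool)) (ctab D)|
        ≤ ∑ _γ : ↥S, 2 * (2 : ℝ) ^ (-(k : ℝ) / 2) :=
          Finset.sum_le_sum fun γ _ => sens _ D' D hneighbour'
      _ = S.card * (2 * (2 : ℝ) ^ (-(k : ℝ) / 2)) := by
          rw [Finset.sum_const, Finset.card_univ, Fintype.card_coe, nsmul_eq_mul]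
      _ = ε * (2 * S.card / ε * (2 : ℝ) ^ (-(k : ℝ) / 2)) := by
          field_simp
  exact laplace_dp hb _ _ hsum hB
end

section
/- Let k be a natural number, S ⊆ {0,1}^k a nonempty finite set, ε > 0 and t ≥ 1. Let h : {0,1}^k → ℝ be a table with all entries nonnegative, and let (X_γ)_{γ ∈ S} be independent Laplace random variables with scale b = 2|S|·ε^{−1}·2^{−k/2}. Then with probability at least 1 − exp(−t), the table h + Σ_{γ ∈ S} X_γ · f^γ + (4t|S|²·ε^{−1}·2^{−k/2}) · f^{0} has all entries nonnegative, where 0 denotes the all-zeros index so that f^{0} is the constant table with value 2^{−k/2}. In particular, Pr[ Σ_{γ ∈ S} |X_γ| ≤ 4t|S|²/(ε·2^{k/2}) ] ≥ 1 − exp(−t). -/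
open MeasureTheory Finset

/-
Both events contain `{Σ_γ |X_γ| ≤ T}` with `T = 4t|S|²/(ε·2^{k/2}) = 2t|S|b`: every entry of
`Σ_γ X_γ f^γ` has absolute value at most `2^{-k/2} Σ_γ |X_γ|`, while the shift by `f^0` adds
exactly `2^{-k/2} T` to every entry. Each `|X_γ|` is exponential with mean `b`. For `|S| ≥ 4`, a
Chernoff bound at rate `1/(2b)` bounds the failure probability by `2^{|S|} e^{-t|S|} ≤ e^{-t}`.
For `|S| ≤ 3` it suffices that every `|X_γ| ≤ 2tb`, which has probability
`(1 - e^{-2t})^{|S|} ≥ (1 - e^{-2t})^3 ≥ 1 - e^{-t}` when `t ≥ 1`.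
-/

open Real ProbabilityTheory

theorem one_sub_exp_neg_le_pow_three {t : ℝ} (ht : 1 ≤ t) :
    1 - exp (-t) ≤ (1 - exp (-(2 * t))) ^ 3 := by
  set u := exp (-t)
  have hu : 0 < u := exp_pos _
  have hu' : u ≤ 0.368 :=
    ((exp_le_exp.2 (by linarith)).trans_lt exp_neg_one_lt_d9).le.trans (by norm_num)
  have hsq : exp (-(2 * t)) = u ^ 2 := by
    rw [← exp_nat_mul]
    ring_nf
  rw [hsq]
  have hd : 0 ≤ 0.368 - u := by linarith
  nlinarith [mul_nonneg hd hu.le, mul_nonneg (mul_nonneg hd hu.le) hu.le, pow_pos hu 3]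

theorem two_pow_mul_exp_neg_le {t : ℝ} (ht : 1 ≤ t) {n : ℕ} (hn : 4 ≤ n) :
    2 ^ n * exp (-(t * n)) ≤ exp (-t) := by
  have hn' : (4 : ℝ) ≤ n := by exact_mod_cast hn
  rw [← rpow_natCast, rpow_def_of_pos two_pos, ← exp_add, exp_le_exp]
  nlinarith [log_two_lt_d9]

section Laplace

variable {b : ℝ}

theorem integral_laplaceMeasure_comp_abs (hb : 0 < b) (f : ℝ → ℝ) :
    ∫ x, f |x| ∂laplaceMeasure b = ∫ y in Set.Ioi 0, b⁻¹ * exp (-y / b) * f y := by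
  have hdensity : ∀ x : ℝ, (ENNReal.ofReal (1 / (2 * b) * exp (-|x| / b))).toReal • f |x|
      = (fun y => (2 * b)⁻¹ * exp (-y / b) * f y) |x| := fun x => by
    rw [ENNReal.toReal_ofReal (by positivity), smul_eq_mul, one_div]
  rw [laplaceMeasure, integral_withDensity_eq_integral_toReal_smul (by fun_prop)
      (ae_of_all _ fun _ => ENNReal.ofReal_lt_top), integral_congr_ae (ae_of_all _ hdensity),
    integral_comp_abs (f := fun y => (2 * b)⁻¹ * exp (-y / b) * f y), ← integral_const_mul]
  congr 1 with y
  ring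

theorem laplaceMeasure_real_abs_gt (hb : 0 < b) {c : ℝ} (hc : 0 ≤ c) :
    (laplaceMeasure b).real {y | c < |y|} = exp (-(c / b)) := by
  have hind : ∀ y, b⁻¹ * exp (-y / b) * (Set.Ioi c).indicator 1 y
      = (Set.Ioi c).indicator (fun y => b⁻¹ * exp (-b⁻¹ * y)) y := fun y => by
    by_cases hy : y ∈ Set.Ioi c <;> simp [hy, div_eq_inv_mul]
  rw [← integral_indicator_one (measurableSet_lt measurable_const measurable_abs),
    show {y : ℝ | c < |y|}.indicator 1 = fun x => (Set.Ioi c).indicator 1 |x| from rfl,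
    integral_laplaceMeasure_comp_abs hb, setIntegral_congr_fun measurableSet_Ioi fun y _ => hind y,
    setIntegral_indicator measurableSet_Ioi, Set.Ioi_inter_Ioi, sup_eq_right.2 hc,
    integral_const_mul, integral_exp_mul_Ioi (by simpa using hb)]
  field_simp

theorem integral_exp_mul_abs_laplaceMeasure (hb : 0 < b) {l : ℝ} (hlb : l * b < 1) :
    ∫ x, exp (l * |x|) ∂laplaceMeasure b = (1 - l * b)⁻¹ := by
  have hrate : l - b⁻¹ < 0 := by
    rw [sub_neg, ← one_div, lt_div_iff₀ hb]
    exact hlb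
  have hexp : ∀ y, b⁻¹ * exp (-y / b) * exp (l * y) = b⁻¹ * exp ((l - b⁻¹) * y) := fun y => by
    rw [mul_assoc, ← exp_add]
    ring_nf
  rw [integral_laplaceMeasure_comp_abs hb (fun y => exp (l * y))]
  simp_rw [hexp]
  rw [integral_const_mul, integral_exp_mul_Ioi hrate, mul_zero, exp_zero]
  have : 1 - l * b ≠ 0 := by linarith
  field_simp
  rw [← neg_sub (b * l) 1, div_neg]

theorem integrable_exp_mul_abs_laplaceMeasure (hb : 0 < b) {l : ℝ} (hlb : l * b < 1) :
    Integrable (fun x => exp (l * |x|)) (laplaceMeasure b) :=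
  .of_integral_ne_zero <| by
    rw [integral_exp_mul_abs_laplaceMeasure hb hlb]
    exact inv_ne_zero (by linarith)

theorem isProbabilityMeasure_laplaceMeasure (hb : 0 < b) :
    IsProbabilityMeasure (laplaceMeasure b) := by
  have h := integral_exp_mul_abs_laplaceMeasure hb (l := 0) (by simp)
  simp only [zero_mul, exp_zero, integral_const, smul_eq_mul, mul_one, sub_zero, inv_one] at h
  exact ⟨ENNReal.toReal_eq_one_iff _ |>.1 h⟩

end Laplace

section Product

variable {ι : Type*} [Fintype ι] {b : ℝ}

theorem measureReal_pi_laplaceMeasure_sum_abs_ge_le (hb : 0 < b) {l : ℝ} (hl : 0 ≤ l)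
    (hlb : l * b < 1) (T : ℝ) :
    (Measure.pi fun _ : ι => laplaceMeasure b).real {x | T ≤ ∑ i, |x i|}
      ≤ exp (-(l * T)) * (1 - l * b)⁻¹ ^ Fintype.card ι := by
  have := isProbabilityMeasure_laplaceMeasure hb
  have hprod : (fun x : ι → ℝ => exp (l * ∑ i, |x i|)) = fun x => ∏ i, exp (l * |x i|) := by
    simp_rw [mul_sum, exp_sum]
  have hchernoff := measure_ge_le_exp_mul_mgf (X := fun x : ι → ℝ => ∑ i, |x i|) T hl
    (hprod ▸ Integrable.fintype_prod fun _ => integrable_exp_mul_abs_laplaceMeasure hb hlb)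
  rwa [mgf, hprod, integral_fintype_prod_eq_pow (fun y => exp (l * |y|)),
    integral_exp_mul_abs_laplaceMeasure hb hlb, neg_mul] at hchernoff

theorem pi_laplaceMeasure_forall_abs_le (hb : 0 < b) {c : ℝ} (hc : 0 ≤ c) :
    Measure.pi (fun _ : ι => laplaceMeasure b) {x | ∀ i, |x i| ≤ c}
      = ENNReal.ofReal ((1 - exp (-(c / b))) ^ Fintype.card ι) := by
  have := isProbabilityMeasure_laplaceMeasure hb
  have hcoord : laplaceMeasure b {y | |y| ≤ c} = ENNReal.ofReal (1 - exp (-(c / b))) := by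
    rw [← ofReal_measureReal, ← laplaceMeasure_real_abs_gt hb hc,
      ← probReal_compl_eq_one_sub (measurableSet_lt measurable_const measurable_abs)]
    simp_rw [Set.compl_ofPred, not_lt]
  have hbox : {x : ι → ℝ | ∀ i, |x i| ≤ c} = Set.univ.pi fun _ => {y | |y| ≤ c} := by
    ext x
    simp
  rw [hbox, Measure.pi_pi, hcoord, prod_const, card_univ,
    ENNReal.ofReal_pow (sub_nonneg.2 (exp_le_one_iff.2 (by simp; positivity)))]

end Product

theorem one_sub_exp_neg_le_pi_laplaceMeasure_sum_abs_le {ι : Type*} [Fintype ι] {b t : ℝ}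
    (hb : 0 < b) (ht : 1 ≤ t) :
    ENNReal.ofReal (1 - exp (-t))
      ≤ Measure.pi (fun _ : ι => laplaceMeasure b)
          {x | ∑ i, |x i| ≤ 2 * t * Fintype.card ι * b} := by
  have := isProbabilityMeasure_laplaceMeasure hb
  set n := Fintype.card ι
  -- For `n ≤ 3` and `t = 1` no Chernoff rate beats `e^{-t}`; the exact coordinatewise tails do.
  rcases le_or_gt n 3 with hn | hn
  · have hbox : {x : ι → ℝ | ∀ i, |x i| ≤ 2 * t * b}
        ⊆ {x | ∑ i, |x i| ≤ 2 * t * n * b} := fun x hx => by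
      simpa [n, mul_comm, mul_left_comm] using sum_le_sum fun i (_ : i ∈ univ) => hx i
    calc ENNReal.ofReal (1 - exp (-t))
        ≤ ENNReal.ofReal ((1 - exp (-(2 * t * b / b))) ^ n) := by
          refine ENNReal.ofReal_le_ofReal ?_
          rw [mul_div_cancel_right₀ _ hb.ne']
          exact (one_sub_exp_neg_le_pow_three ht).trans
            (pow_le_pow_of_le_one (by simp; positivity) (by simp; positivity) hn)
      _ = _ := (pi_laplaceMeasure_forall_abs_le hb (by positivity)).symm
      _ ≤ _ := measure_mono hbox
  · set P := Measure.pi fun _ : ι => laplaceMeasure b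
    have htail : P.real {x | 2 * t * n * b ≤ ∑ i, |x i|} ≤ exp (-t) := by
      refine (measureReal_pi_laplaceMeasure_sum_abs_ge_le hb (l := (2 * b)⁻¹) (by positivity)
        (by field_simp; norm_num) _).trans (le_of_eq_of_le ?_ (two_pow_mul_exp_neg_le ht hn))
      rw [show (2 * b)⁻¹ * (2 * t * n * b) = t * n by field_simp,
        show (1 - (2 * b)⁻¹ * b)⁻¹ = 2 by field_simp; norm_num, mul_comm]
    have hmeas : MeasurableSet {x : ι → ℝ | 2 * t * n * b ≤ ∑ i, |x i|} :=
      measurableSet_le measurable_const (by fun_prop)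
    have hcompl : {x : ι → ℝ | 2 * t * n * b ≤ ∑ i, |x i|}ᶜ
        ⊆ {x | ∑ i, |x i| ≤ 2 * t * n * b} := fun _ hx =>
      (not_le.1 (Set.notMem_ofPred_iff.1 hx)).le
    calc ENNReal.ofReal (1 - exp (-t))
        ≤ ENNReal.ofReal (P.real {x | 2 * t * n * b ≤ ∑ i, |x i|}ᶜ) := by
          rw [probReal_compl_eq_one_sub hmeas]
          gcongr
      _ = P {x | 2 * t * n * b ≤ ∑ i, |x i|}ᶜ := ofReal_measureReal
      _ ≤ _ := measure_mono hcompl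

section Fourier

variable {k : ℕ}

theorem abs_cubeFourier (j γ : Fin k → Bool) : |cubeFourier j γ| = 2 ^ (-(k : ℝ) / 2) := by
  simp [cubeFourier, abs_of_pos (rpow_pos_of_pos two_pos _)]

theorem cubeFourier_false (γ : Fin k → Bool) :
    cubeFourier (fun _ => false) γ = 2 ^ (-(k : ℝ) / 2) := by
  simp [cubeFourier, cubeInner]

theorem abs_sum_mul_cubeFourier_le {ι : Type*} [Fintype ι] (j : ι → Fin k → Bool) (x : ι → ℝ)
    (γ : Fin k → Bool) :
    |∑ i, x i * cubeFourier (j i) γ| ≤ (∑ i, |x i|) * 2 ^ (-(k : ℝ) / 2) :=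
  (abs_sum_le_sum_abs _ _).trans_eq (by simp [abs_mul, abs_cubeFourier, sum_mul])

end Fourier

/-- Let `S ⊆ {0,1}^k` be nonempty, `ε > 0`, `t ≥ 1`, let `h` be a table with
nonnegative entries and `(X_γ)_{γ∈S}` i.i.d. Laplace with scale `2|S|·ε⁻¹·2^{−k/2}`.
Then with probability at least `1 − e^{−t}` the table
`h + Σ_{γ∈S} X_γ·f^γ + (4t|S|²·ε⁻¹·2^{−k/2})·f^0` is entrywise nonnegative;
in particular `Pr[Σ_{γ∈S} |X_γ| ≤ 4t|S|²/(ε·2^{k/2})] ≥ 1 − e^{−t}`. -/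
theorem stmt_10 (k : ℕ) (S : Finset (Fin k → Bool)) (hS : S.Nonempty)
    (ε t : ℝ) (hε : 0 < ε) (ht : 1 ≤ t)
    (h : (Fin k → Bool) → ℝ) (hpos : ∀ η, 0 ≤ h η)
    (P : Measure (↥S → ℝ))
    (hP : P = Measure.pi fun _ : ↥S =>
      laplaceMeasure (2 * S.card / ε * (2 : ℝ) ^ (-(k : ℝ) / 2))) :
    ENNReal.ofReal (1 - Real.exp (-t)) ≤
      P {x | ∀ η, 0 ≤ h η + (∑ γ : ↥S, x γ * cubeFourier γ.1 η) +
          4 * t * (S.card : ℝ) ^ 2 / ε * (2 : ℝ) ^ (-(k : ℝ) / 2) *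
            cubeFourier (fun _ => false) η} ∧
    ENNReal.ofReal (1 - Real.exp (-t)) ≤
      P {x | ∑ γ : ↥S, |x γ| ≤
          4 * t * (S.card : ℝ) ^ 2 / (ε * (2 : ℝ) ^ ((k : ℝ) / 2))} := by
  subst hP
  have hpow : (2 : ℝ) ^ (-(k : ℝ) / 2) = ((2 : ℝ) ^ ((k : ℝ) / 2))⁻¹ := by
    rw [neg_div, rpow_neg zero_le_two]
  have hb : 0 < 2 * S.card / ε * (2 : ℝ) ^ (-(k : ℝ) / 2) := by
    have := hS.card_pos
    positivity
  have hsum := one_sub_exp_neg_le_pi_laplaceMeasure_sum_abs_le (ι := S) hb ht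
  have hT : 2 * t * Fintype.card S * (2 * S.card / ε * (2 : ℝ) ^ (-(k : ℝ) / 2))
      = 4 * t * (S.card : ℝ) ^ 2 / (ε * (2 : ℝ) ^ ((k : ℝ) / 2)) := by
    rw [Fintype.card_coe, hpow]
    field_simp
    ring
  rw [hT] at hsum
  refine ⟨hsum.trans (measure_mono fun x hx η => ?_), hsum⟩
  have hcoef : 4 * t * (S.card : ℝ) ^ 2 / ε * (2 : ℝ) ^ (-(k : ℝ) / 2)
      = 4 * t * (S.card : ℝ) ^ 2 / (ε * (2 : ℝ) ^ ((k : ℝ) / 2)) := by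
    rw [hpow, div_mul_eq_div_div, div_eq_mul_inv _ ((2 : ℝ) ^ _)]
  have hfourier := abs_le.1 (abs_sum_mul_cubeFourier_le (fun γ : S => γ.1) x η)
  rw [hcoef, cubeFourier_false]
  nlinarith [hpos η, mul_le_mul_of_nonneg_right hx (rpow_pos_of_pos two_pos (-(k : ℝ) / 2)).le]
end

section
/- Let Θ be a measurable space with a probability measure (prior) ξ, let I be a nonempty finite index set, let X_i be nonempty sets with X = Π_{i∈I} X_i and pseudometrics ρ_i on X_i. For each θ ∈ Θ and i ∈ I let p_{θ,i} : X → (0,∞) be such that θ ↦ p_{θ,i}(x) is measurable for each x, and suppose there are constants L_i ≥ 0 such that for every θ ∈ Θ and all x, y ∈ X, |ln p_{θ,i}(x) − ln p_{θ,i}(y)| ≤ L_i · ρ_i(x_i, y_i). Define the joint likelihood p_θ(x) = Π_{i∈I} p_{θ,i}(x), assume 0 < ∫_Θ p_θ(x) dξ(θ) < ∞ for all x ∈ X, and define the posterior ξ(B | x) = ∫_B p_θ(x) dξ(θ) / ∫_Θ p_θ(x) dξ(θ) for measurable B ⊆ Θ. Then for all measurable B ⊆ Θ and all x, y ∈ X,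 ξ(B | x) ≤ exp( 2·(max_{i∈I} L_i)·ρ(x,y) ) · ξ(B | y), where ρ(x,y) = Σ_{i∈I} ρ_i(x_i, y_i); i.e. the posterior is (2·max_i L_i, 0)-differentially private under the pseudometric ρ. -/
open MeasureTheory Finset
open scoped ENNReal

/-!
Each factor of the likelihood moves by at most a factor `exp (M ρᵢ(xᵢ, yᵢ))` when `x` is replaced
by `y`, with `M = maxᵢ Lᵢ`, so the joint likelihoods satisfy `p_θ(x) ≤ k p_θ(y)` and
`p_θ(y) ≤ k p_θ(x)` with `k = exp (M ρ(x, y))`, uniformly in `θ`. Integrating, the numerator of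
the posterior grows by at most `k` and the normalising constant shrinks by at most `k`, whence
the factor `k² = exp (2 M ρ(x, y))`.
-/

namespace ENNReal

theorem div_le_mul_mul_div {a b c d k : ℝ≥0∞} (hk₀ : k ≠ 0) (hk : k ≠ ⊤)
    (hac : a ≤ k * c) (hdb : d ≤ k * b) : a / b ≤ k * k * (c / d) := by
  have hinv : b⁻¹ ≤ k / d := by
    rw [ENNReal.le_div_iff_mul_le (Or.inr hk₀) (Or.inr hk), ← ENNReal.div_eq_inv_mul,
      ENNReal.div_le_iff_le_mul (Or.inr hk) (Or.inr hk₀)]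
    exact hdb
  calc a / b = a * b⁻¹ := div_eq_mul_inv a b
    _ ≤ k * c * (k / d) := mul_le_mul' hac hinv
    _ = k * k * (c / d) := by simp only [div_eq_mul_inv]; ring

end ENNReal

theorem Real.prod_le_exp_sum_mul_prod {ι : Type*} (s : Finset ι) {u v r : ι → ℝ}
    (hu : ∀ i ∈ s, 0 < u i) (hv : ∀ i ∈ s, 0 < v i)
    (hlog : ∀ i ∈ s, Real.log (u i) - Real.log (v i) ≤ r i) :
    ∏ i ∈ s, u i ≤ Real.exp (∑ i ∈ s, r i) * ∏ i ∈ s, v i := by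
  have hfactor : ∀ i ∈ s, u i ≤ Real.exp (r i) * v i := fun i hi => by
    rw [← Real.exp_log (hv i hi), ← Real.exp_add, ← Real.log_le_iff_le_exp (hu i hi)]
    linarith [hlog i hi]
  rw [Real.exp_sum, ← prod_mul_distrib]
  exact prod_le_prod (fun i hi => (hu i hi).le) hfactor

theorem MeasureTheory.setLIntegral_div_lintegral_le {Θ : Type*} [MeasurableSpace Θ]
    (μ : Measure Θ) {f g : Θ → ℝ≥0∞} {k : ℝ≥0∞} (hk₀ : k ≠ 0) (hk : k ≠ ⊤)
    (hfg : ∀ θ, f θ ≤ k * g θ) (hgf : ∀ θ, g θ ≤ k * f θ) (B : Set Θ) :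
    (∫⁻ θ in B, f θ ∂μ) / (∫⁻ θ, f θ ∂μ) ≤
      k * k * ((∫⁻ θ in B, g θ ∂μ) / (∫⁻ θ, g θ ∂μ)) := by
  have hmono : ∀ (ν : Measure Θ) {f g : Θ → ℝ≥0∞}, (∀ θ, f θ ≤ k * g θ) →
      ∫⁻ θ, f θ ∂ν ≤ k * ∫⁻ θ, g θ ∂ν := fun ν _ _ h => by
    rw [← lintegral_const_mul' k _ hk]
    exact lintegral_mono h
  exact ENNReal.div_le_mul_mul_div hk₀ hk (hmono _ hfg) (hmono μ hgf)

theorem stmt_15_general {Θ : Type*} [MeasurableSpace Θ] (ξ : Measure Θ)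
    {I : Type*} [Fintype I] [Nonempty I]
    {X : I → Type*} [∀ i, PseudoMetricSpace (X i)]
    (p : Θ → I → (∀ i, X i) → ℝ) (hpos : ∀ θ i x, 0 < p θ i x)
    (L : I → ℝ)
    (hlip : ∀ (θ : Θ) (i : I) (x y : ∀ i, X i),
      |Real.log (p θ i x) - Real.log (p θ i y)| ≤ L i * dist (x i) (y i))
    (B : Set Θ) (x y : ∀ i, X i) :
    (∫⁻ θ in B, ENNReal.ofReal (∏ i, p θ i x) ∂ξ) /
        (∫⁻ θ, ENNReal.ofReal (∏ i, p θ i x) ∂ξ) ≤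
      ENNReal.ofReal
          (Real.exp (2 * (Finset.univ.sup' Finset.univ_nonempty L) *
            ∑ i, dist (x i) (y i))) *
        ((∫⁻ θ in B, ENNReal.ofReal (∏ i, p θ i y) ∂ξ) /
          (∫⁻ θ, ENNReal.ofReal (∏ i, p θ i y) ∂ξ)) := by
  set M := Finset.univ.sup' Finset.univ_nonempty L
  set k := ENNReal.ofReal (Real.exp (M * ∑ i, dist (x i) (y i)))
  have hlog : ∀ θ i, |Real.log (p θ i x) - Real.log (p θ i y)| ≤ M * dist (x i) (y i) :=
    fun θ i => (hlip θ i x y).trans <|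
      mul_le_mul_of_nonneg_right (le_sup' L (mem_univ i)) dist_nonneg
  have hratio : ∀ θ (u v : ∀ i, X i),
      (∀ i, Real.log (p θ i u) - Real.log (p θ i v) ≤ M * dist (x i) (y i)) →
      ENNReal.ofReal (∏ i, p θ i u) ≤ k * ENNReal.ofReal (∏ i, p θ i v) := by
    intro θ u v h
    rw [← ENNReal.ofReal_mul (Real.exp_pos _).le, mul_sum]
    exact ENNReal.ofReal_le_ofReal <| Real.prod_le_exp_sum_mul_prod _
      (fun i _ => hpos θ i u) (fun i _ => hpos θ i v) (fun i _ => h i)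
  have hk : ENNReal.ofReal (Real.exp (2 * M * ∑ i, dist (x i) (y i))) = k * k := by
    rw [← ENNReal.ofReal_mul (Real.exp_pos _).le, ← Real.exp_add]
    ring_nf
  rw [hk]
  refine setLIntegral_div_lintegral_le ξ (ENNReal.ofReal_pos.2 (Real.exp_pos _)).ne'
    ENNReal.ofReal_ne_top (fun θ => hratio θ x y fun i => ?_)
    (fun θ => hratio θ y x fun i => ?_) B
  · exact (le_abs_self _).trans (hlog θ i)
  · exact (le_abs_self _).trans ((abs_sub_comm _ _).trans_le (hlog θ i))

/-- Posterior sampling for a Lipschitz Bayesian network is differentially private: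
if each conditional likelihood satisfies `|ln p_{θ,i}(x) − ln p_{θ,i}(y)| ≤
L_i·ρ_i(x_i,y_i)`, the joint likelihood is `p_θ(x) = Π_i p_{θ,i}(x)`, and the
posterior is `ξ(B|x) = ∫_B p_θ(x)dξ / ∫_Θ p_θ(x)dξ`, then for all measurable `B`
and all `x, y`, `ξ(B|x) ≤ exp(2·(max_i L_i)·ρ(x,y))·ξ(B|y)`, where
`ρ(x,y) = Σ_i ρ_i(x_i,y_i)`. -/
theorem stmt_15 {Θ : Type*} [MeasurableSpace Θ] (ξ : Measure Θ)
    [IsProbabilityMeasure ξ] {I : Type*} [Fintype I] [Nonempty I]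
    {X : I → Type*} [∀ i, Nonempty (X i)] [∀ i, PseudoMetricSpace (X i)]
    (p : Θ → I → (∀ i, X i) → ℝ) (hpos : ∀ θ i x, 0 < p θ i x)
    (hmeas : ∀ (i : I) (x : ∀ i, X i), Measurable fun θ => p θ i x)
    (L : I → ℝ) (hL : ∀ i, 0 ≤ L i)
    (hlip : ∀ (θ : Θ) (i : I) (x y : ∀ i, X i),
      |Real.log (p θ i x) - Real.log (p θ i y)| ≤ L i * dist (x i) (y i))
    (hint : ∀ x : ∀ i, X i,
      0 < ∫⁻ θ, ENNReal.ofReal (∏ i, p θ i x) ∂ξ ∧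
      ∫⁻ θ, ENNReal.ofReal (∏ i, p θ i x) ∂ξ < ⊤)
    (B : Set Θ) (hB : MeasurableSet B) (x y : ∀ i, X i) :
    (∫⁻ θ in B, ENNReal.ofReal (∏ i, p θ i x) ∂ξ) /
        (∫⁻ θ, ENNReal.ofReal (∏ i, p θ i x) ∂ξ) ≤
      ENNReal.ofReal
          (Real.exp (2 * (Finset.univ.sup' Finset.univ_nonempty L) *
            ∑ i, dist (x i) (y i))) *
        ((∫⁻ θ in B, ENNReal.ofReal (∏ i, p θ i y) ∂ξ) /
          (∫⁻ θ, ENNReal.ofReal (∏ i, p θ i y) ∂ξ)) :=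
  stmt_15_general ξ p hpos L hlip B x y
end

section
/- Let Θ be a measurable space with probability measure ξ, and let u : Θ → ℝ be a bounded measurable utility function with supremum u* = sup_{θ∈Θ} u(θ). Let ε > 0 and let μ be the probability measure on Θ with density proportional to exp(ε·u(θ)) with respect to ξ, i.e. μ(B) = ∫_B exp(ε·u(θ)) dξ(θ) / ∫_Θ exp(ε·u(θ)) dξ(θ). For t > 0 define S_t = {θ ∈ Θ : u(θ) > u* − t}, and assume ξ(S_t) > 0. Then the probability that a sample misses S_{2t} satisfies μ(S_{2t}^c) ≤ exp(−ε t) / ξ(S_t). -/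
open MeasureTheory

/-- Utility of the exponential mechanism: let `u` be a bounded measurable utility
with supremum `u* = sup_θ u(θ)`, and let `μ` have density proportional to
`exp(ε·u)` with respect to the probability measure `ξ`.  For `t > 0` let
`S_t = {θ : u(θ) > u* − t}` and assume `ξ(S_t) > 0`.  Then
`μ(S_{2t}ᶜ) ≤ exp(−εt)/ξ(S_t)`. -/
theorem stmt_16 {Θ : Type*} [MeasurableSpace Θ] [Nonempty Θ] (ξ : Measure Θ)
    [IsProbabilityMeasure ξ] (u : Θ → ℝ) (hu : Measurable u)
    (hbdd : ∃ C : ℝ, ∀ θ, |u θ| ≤ C)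
    (ε : ℝ) (hε : 0 < ε) (t : ℝ) (ht : 0 < t)
    (μ : Measure Θ)
    (hμ : ∀ B : Set Θ, MeasurableSet B → μ B =
      (∫⁻ θ in B, ENNReal.ofReal (Real.exp (ε * u θ)) ∂ξ) /
        ∫⁻ θ, ENNReal.ofReal (Real.exp (ε * u θ)) ∂ξ)
    (hS : 0 < ξ {θ | (⨆ θ', u θ') - t < u θ}) :
    μ ({θ | (⨆ θ', u θ') - 2 * t < u θ}ᶜ) ≤
      ENNReal.ofReal (Real.exp (-(ε * t))) / ξ {θ | (⨆ θ', u θ') - t < u θ} := by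
  obtain ⟨C, hC⟩ := hbdd
  set M := ⨆ θ', u θ' with hM
  set St := {θ | M - t < u θ} with hSt
  set S2 := {θ | M - 2 * t < u θ} with hS2
  set f := fun θ => ENNReal.ofReal (Real.exp (ε * u θ)) with hf
  have hfmeas : Measurable f := ((hu.const_mul ε).exp).ennreal_ofReal
  have hmeasS2 : MeasurableSet S2 := measurableSet_lt measurable_const hu
  rw [hμ S2ᶜ hmeasS2.compl]
  set A : ENNReal := ENNReal.ofReal (Real.exp (ε * (M - 2 * t))) with hA
  set B : ENNReal := ENNReal.ofReal (Real.exp (ε * (M - t))) with hB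
  have hnum : ∫⁻ θ in S2ᶜ, f θ ∂ξ ≤ A := by
    calc ∫⁻ θ in S2ᶜ, f θ ∂ξ ≤ ∫⁻ _ in S2ᶜ, A ∂ξ := by
          apply setLIntegral_mono measurable_const
          intro θ hθ
          have hle : u θ ≤ M - 2 * t := not_lt.mp hθ
          exact ENNReal.ofReal_le_ofReal (Real.exp_le_exp.mpr
            (mul_le_mul_of_nonneg_left hle hε.le))
      _ = A * ξ S2ᶜ := setLIntegral_const _ _
      _ ≤ A * 1 := mul_le_mul_right prob_le_one _
      _ = A := mul_one _
  have hden : B * ξ St ≤ ∫⁻ θ, f θ ∂ξ := by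
    have : B * ξ St = ∫⁻ _ in St, B ∂ξ := (setLIntegral_const _ _).symm
    rw [this]
    calc ∫⁻ _ in St, B ∂ξ ≤ ∫⁻ θ in St, f θ ∂ξ := by
          apply setLIntegral_mono hfmeas
          intro θ hθ
          have hle : M - t ≤ u θ := le_of_lt hθ
          exact ENNReal.ofReal_le_ofReal (Real.exp_le_exp.mpr
            (mul_le_mul_of_nonneg_left hle hε.le))
      _ ≤ ∫⁻ θ, f θ ∂ξ := setLIntegral_le_lintegral _ _
  have hB0 : B ≠ 0 := (ENNReal.ofReal_pos.mpr (Real.exp_pos _)).ne'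
  have hBtop : B ≠ ⊤ := ENNReal.ofReal_ne_top
  calc (∫⁻ θ in S2ᶜ, f θ ∂ξ) / ∫⁻ θ, f θ ∂ξ
      ≤ A / (B * ξ St) := ENNReal.div_le_div hnum hden
    _ = A / B / ξ St := by
        rw [div_eq_mul_inv, div_eq_mul_inv, div_eq_mul_inv,
          ENNReal.mul_inv (Or.inl hB0) (Or.inl hBtop), mul_assoc]
    _ = ENNReal.ofReal (Real.exp (-(ε * t))) / ξ St := by
        rw [hA, hB, ← ENNReal.ofReal_div_of_pos (Real.exp_pos _), ← Real.exp_sub]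
        ring_nf
end

section
/- Let b > 0, let n > 0 and let a ∈ [0, n]. Let G(u) = (1/2)·exp(−u/b) for u ≥ 0 and G(u) = 1 − (1/2)·exp(u/b) for u < 0 (the upper tail function of the Laplace distribution with scale b, i.e. G(u) = Pr[Y > u] for Y Laplace with scale b). Then ∫_0^n G(z − a) dz + (n/2)·exp((a − n)/b) = a + (b/2)·exp(−a/b) + ((n − b)/2)·exp((a − n)/b). -/
/-! The tail `G` is `1 - exp(u/b)/2` left of `0` and `exp(-u/b)/2` right of it, so splitting
`∫₀ⁿ G(z - a) dz` at `z = a` leaves two exponential integrals: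
`a - (b/2)(1 - e^{-a/b})` on `[0, a]` and `(b/2)(1 - e^{(a-n)/b})` on `[a, n]`. -/

open Real

theorem integral_exp_sub_div {b : ℝ} (hb : b ≠ 0) (c d e : ℝ) :
    ∫ z in c..d, exp ((z - e) / b) = b * (exp ((d - e) / b) - exp ((c - e) / b)) := by
  have hderiv : ∀ z, HasDerivAt (fun z => b * exp ((z - e) / b)) (exp ((z - e) / b)) z :=
    fun z => ((((hasDerivAt_id' z).sub_const e).div_const b).exp.const_mul b).congr_deriv
      (by field_simp)
  rw [intervalIntegral.integral_eq_sub_of_hasDerivAt (fun z _ => hderiv z)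
    ((by fun_prop : Continuous fun z => exp ((z - e) / b)).intervalIntegrable _ _), mul_sub]

noncomputable def laplaceTail (b u : ℝ) : ℝ :=
  if 0 ≤ u then 1 / 2 * exp (-u / b) else 1 - 1 / 2 * exp (u / b)

section

variable {b u : ℝ}

theorem laplaceTail_of_nonneg (hu : 0 ≤ u) : laplaceTail b u = 1 / 2 * exp (-u / b) := if_pos hu

theorem laplaceTail_of_nonpos (hu : u ≤ 0) : laplaceTail b u = 1 - 1 / 2 * exp (u / b) := by
  rcases hu.lt_or_eq with hu | rfl
  · exact if_neg hu.not_ge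
  · norm_num [laplaceTail]

theorem continuous_laplaceTail (b : ℝ) : Continuous (laplaceTail b) :=
  Continuous.if_le (by fun_prop) (by fun_prop) continuous_const continuous_id
    (fun u hu => by subst hu; norm_num)

variable (hb : b ≠ 0)
include hb

theorem integral_laplaceTail_sub_left {a c : ℝ} (hca : c ≤ a) :
    ∫ z in c..a, laplaceTail b (z - a) = a - c - b / 2 * (1 - exp ((c - a) / b)) := by
  rw [intervalIntegral.integral_congr (g := fun z => 1 - 1 / 2 * exp ((z - a) / b))
      fun z hz => laplaceTail_of_nonpos (by linarith [(Set.uIcc_of_le hca ▸ hz).2]),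
    intervalIntegral.integral_sub intervalIntegrable_const
      ((by fun_prop : Continuous fun z => 1 / 2 * exp ((z - a) / b)).intervalIntegrable _ _),
    intervalIntegral.integral_const_mul, integral_exp_sub_div hb, sub_self, zero_div, exp_zero]
  simp only [intervalIntegral.integral_const, smul_eq_mul, mul_one]
  ring

theorem integral_laplaceTail_sub_right {a d : ℝ} (had : a ≤ d) :
    ∫ z in a..d, laplaceTail b (z - a) = b / 2 * (1 - exp ((a - d) / b)) := by
  have hexp : ∀ z, exp (-(z - a) / b) = exp ((z - a) / -b) := fun z => by
    rw [neg_div, div_neg]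
  rw [intervalIntegral.integral_congr (g := fun z => 1 / 2 * exp ((z - a) / -b))
      fun z hz => (laplaceTail_of_nonneg (by linarith [(Set.uIcc_of_le had ▸ hz).1])).trans (by rw [hexp]),
    intervalIntegral.integral_const_mul, integral_exp_sub_div (neg_ne_zero.mpr hb), sub_self,
    zero_div, exp_zero, div_neg, ← neg_div, neg_sub]
  ring

end

theorem stmt_19_general (b n a : ℝ) (hb : 0 < b) (ha : a ∈ Set.Icc 0 n)
    (G : ℝ → ℝ)
    (hG : ∀ u : ℝ, G u =
      if 0 ≤ u then 1 / 2 * Real.exp (-u / b) else 1 - 1 / 2 * Real.exp (u / b)) :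
    (∫ z in (0 : ℝ)..n, G (z - a)) + n / 2 * Real.exp ((a - n) / b) =
      a + b / 2 * Real.exp (-a / b) + (n - b) / 2 * Real.exp ((a - n) / b) := by
  obtain rfl : G = laplaceTail b := funext hG
  have hint : ∀ c d, IntervalIntegrable (fun z => laplaceTail b (z - a)) MeasureTheory.volume c d :=
    ((continuous_laplaceTail b).comp (continuous_sub_right a)).intervalIntegrable
  rw [← intervalIntegral.integral_add_adjacent_intervals (hint 0 a) (hint a n),
    integral_laplaceTail_sub_left hb.ne' ha.1, integral_laplaceTail_sub_right hb.ne' ha.2,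
    zero_sub]
  ring

/-- Let `b > 0`, `n > 0`, `a ∈ [0,n]`, and let
`G(u) = (1/2)·exp(−u/b)` for `u ≥ 0` and `G(u) = 1 − (1/2)·exp(u/b)` for `u < 0`
(the upper tail function of the Laplace distribution with scale `b`).  Then
`∫₀ⁿ G(z−a) dz + (n/2)·exp((a−n)/b) = a + (b/2)·exp(−a/b) + ((n−b)/2)·exp((a−n)/b)`. -/
theorem stmt_19 (b n a : ℝ) (hb : 0 < b) (hn : 0 < n) (ha : a ∈ Set.Icc 0 n)
    (G : ℝ → ℝ)
    (hG : ∀ u : ℝ, G u =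
      if 0 ≤ u then 1 / 2 * Real.exp (-u / b) else 1 - 1 / 2 * Real.exp (u / b)) :
    (∫ z in (0 : ℝ)..n, G (z - a)) + n / 2 * Real.exp ((a - n) / b) =
      a + b / 2 * Real.exp (-a / b) + (n - b) / 2 * Real.exp ((a - n) / b) :=
  stmt_19_general b n a hb ha G hG
end
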